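/- arXiv:2509.22953 — 6 statements merged into one kernel-verified Lean document; each statement's English description precedes it below -/
import Mathlib

section
/- Under consistency, unconfoundedness, and strong overlap, for every a ∈ {0,1} the conditional distribution (regular conditional probability) of the potential outcome Y_a given X under P agrees, for (P ∘ X⁻¹)-almost every x, with the conditional distribution of the observed outcome Y given X computed under the conditional probability measure P(· | A = a). In symbols: condDistrib(Y_a ∣ X; P)(x) = condDistrib(Y ∣ X; P(· | A = a))(x) for (P ∘ X⁻¹)-a.e. x. -/
/-!
Unconfoundedness says that, given `X`, the treatment `A` carries no information on the potential
outcome `Y_a`: the conditional distribution `κ` of `Y_a` given `X` is also the conditional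
distribution of `Y_a` given `(X, A)`. Conditioning on the event `{A = a}`, which is determined by
the conditioning variable `(X, A)`, does not change that conditional distribution, so `κ` is the
conditional distribution of `Y_a`, hence of `Y = Y_a` on `{A = a}`, given `X` under
`P(· | A = a)`. This determines `κ` only almost everywhere for the law of `X` under
`P(· | A = a)`; overlap gives `ε • P(X ∈ ·) ≤ P(X ∈ ·, A = a)`, so that law dominates
`P ∘ X⁻¹`.
-/

open MeasureTheory ProbabilityTheory Set

namespace MeasureTheory.Measure

variable {α β : Type*} {mα : MeasurableSpace α} {mβ : MeasurableSpace β}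

theorem compProd_restrict_left {μ : Measure α} [SFinite μ] {κ : Kernel α β}
    [IsSFiniteKernel κ] {u : Set α} (hu : MeasurableSet u) :
    μ.restrict u ⊗ₘ κ = (μ ⊗ₘ κ).restrict (u ×ˢ univ) := by
  ext s hs
  rw [restrict_apply hs, compProd_apply hs, compProd_apply (hs.inter (hu.prod .univ)),
    ← lintegral_indicator hu]
  congr 1 with x
  by_cases hx : x ∈ u <;> simp [hx, preimage, indicator]

end MeasureTheory.Measure

namespace ProbabilityTheory

variable {Ω 𝓧 𝓨 𝓐 : Type*} {mΩ : MeasurableSpace Ω} {m𝓧 : MeasurableSpace 𝓧}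
  {m𝓨 : MeasurableSpace 𝓨} {m𝓐 : MeasurableSpace 𝓐} {P : Measure Ω} {X : Ω → 𝓧}

theorem HasCondDistrib.cond_preimage [SFinite P] {Y : Ω → 𝓨} {κ : Kernel 𝓧 𝓨}
    [IsSFiniteKernel κ] (h : HasCondDistrib Y X κ P) (hX : Measurable X) (hY : Measurable Y)
    {u : Set 𝓧} (hu : MeasurableSet u) : HasCondDistrib Y X κ P[|X ⁻¹' u] where
  aemeasurable := (hX.prodMk hY).aemeasurable
  map_eq := by
    have hpre : (fun ω ↦ (X ω, Y ω)) ⁻¹' (u ×ˢ univ) = X ⁻¹' u := by ext; simp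
    calc P[|X ⁻¹' u].map (fun ω ↦ (X ω, Y ω))
        = (P (X ⁻¹' u))⁻¹ • (P.map fun ω ↦ (X ω, Y ω)).restrict (u ×ˢ univ) := by
          rw [cond, Measure.map_smul, Measure.restrict_map (hX.prodMk hY) (hu.prod .univ), hpre]
      _ = P[|X ⁻¹' u].map X ⊗ₘ κ := by
          rw [h.map_eq, ← Measure.compProd_restrict_left hu, cond, Measure.map_smul,
            Measure.compProd_smul_left, Measure.restrict_map hX hu]

variable [IsFiniteMeasure P]

theorem CondIndepFun.hasCondDistrib_prodMkRight [StandardBorelSpace Ω]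
    [StandardBorelSpace 𝓨] [Nonempty 𝓨] [StandardBorelSpace 𝓐] [Nonempty 𝓐]
    {W : Ω → 𝓨} {A : Ω → 𝓐} (hX : Measurable X) (hW : Measurable W) (hA : Measurable A)
    (h : A ⟂ᵢ[X, hX; P] W) :
    HasCondDistrib W (fun ω ↦ (X ω, A ω)) ((condDistrib W X P).prodMkRight 𝓐) P where
  aemeasurable := by fun_prop
  map_eq := (condDistrib_ae_eq_iff_measure_eq_compProd _ hW.aemeasurable _).mp
    ((condIndepFun_iff_condDistrib_prod_ae_eq_prodMkRight hW hA hX).mp h)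

theorem mul_measureReal_le_measureReal_inter_of_le_condExp {m : MeasurableSpace Ω}
    (hm : m ≤ mΩ) {s t : Set Ω} (hs : MeasurableSet[mΩ] s) (ht : MeasurableSet[m] t) {c : ℝ}
    (hc : ∀ᵐ ω ∂P, c ≤ (P⟦s | m⟧) ω) :
    c * P.real t ≤ P.real (s ∩ t) := by
  have hind : Integrable (s.indicator fun _ ↦ (1 : ℝ)) P := (integrable_const 1).indicator hs
  calc c * P.real t = ∫ _ in t, c ∂P := by rw [setIntegral_const, smul_eq_mul, mul_comm]
    _ ≤ ∫ ω in t, (P⟦s | m⟧) ω ∂P :=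
        setIntegral_mono_ae (integrable_const c).integrableOn integrable_condExp.integrableOn hc
    _ = ∫ ω in t, s.indicator (fun _ ↦ (1 : ℝ)) ω ∂P := setIntegral_condExp hm hind ht
    _ = P.real (s ∩ t) := by
        rw [setIntegral_indicator hs, setIntegral_const, smul_eq_mul, mul_one, inter_comm]

theorem map_absolutelyContinuous_map_cond (hX : Measurable X) {s : Set Ω} (hs : MeasurableSet s)
    {c : ℝ} (hc_pos : 0 < c) (hc : ∀ᵐ ω ∂P, c ≤ (P⟦s | m𝓧.comap X⟧) ω) :
    P.map X ≪ P[|s].map X := by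
  refine Measure.AbsolutelyContinuous.mk fun S hS hzero ↦ ?_
  rw [Measure.map_apply hX hS, cond_apply hs, mul_eq_zero,
    ENNReal.inv_eq_zero, or_iff_right (measure_ne_top P s)] at hzero
  rw [Measure.map_apply hX hS]
  have hle := mul_measureReal_le_measureReal_inter_of_le_condExp hX.comap_le hs ⟨S, hS, rfl⟩ hc
  rw [(measureReal_eq_zero_iff).mpr hzero] at hle
  exact (measureReal_eq_zero_iff).mp
    (le_antisymm (nonpos_of_mul_nonpos_right hle hc_pos) measureReal_nonneg)

end ProbabilityTheory

theorem cdpo_identification_general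
    {Ω : Type*} [MeasurableSpace Ω] [StandardBorelSpace Ω]
    (P : Measure Ω) [IsProbabilityMeasure P]
    {𝒳 : Type*} [MeasurableSpace 𝒳]
    {𝒴 : Type*} [MeasurableSpace 𝒴] [StandardBorelSpace 𝒴] [Nonempty 𝒴]
    (X : Ω → 𝒳) (hX : Measurable X)
    (A : Ω → Bool) (hA : Measurable A)
    (Y₀ Y₁ : Ω → 𝒴) (hY₀ : Measurable Y₀) (hY₁ : Measurable Y₁)
    -- observed outcome (consistency)
    (Y : Ω → 𝒴) (hYdef : ∀ ω, Y ω = if A ω then Y₁ ω else Y₀ ω)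
    -- propensity scores: σ(X)-measurable versions of E[𝟙{A = a} | σ(X)]
    (π : Bool → 𝒳 → ℝ)
    (hπver : ∀ a : Bool,
      P[fun ω => (if A ω = a then (1 : ℝ) else 0) | MeasurableSpace.comap X inferInstance]
        =ᵐ[P] fun ω => π a (X ω))
    -- strong overlap
    (ε : ℝ) (hε : 0 < ε)
    (hoverlap : ∀ a : Bool, ∀ᵐ ω ∂P, ε ≤ π a (X ω) ∧ π a (X ω) ≤ 1 - ε)
    -- unconfoundedness: (Y₀, Y₁) ⫫ A ∣ σ(X)
    (hunconf : CondIndepFun (MeasurableSpace.comap X inferInstance) hX.comap_le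
      (fun ω => (Y₀ ω, Y₁ ω)) A P) :
    ∀ a : Bool,
      ∀ᵐ x ∂(P.map X),
        condDistrib (fun ω => if a then Y₁ ω else Y₀ ω) X P x
          = condDistrib Y X (P[|{ω | A ω = a}]) x := by
  intro a
  set Ya : Ω → 𝒴 := fun ω ↦ if a then Y₁ ω else Y₀ ω
  have hs : MeasurableSet {ω | A ω = a} := hA (measurableSet_singleton a)
  have hpick : Measurable fun p : 𝒴 × 𝒴 ↦ if a then p.2 else p.1 := by
    cases a
    exacts [measurable_fst, measurable_snd]
  have hYa : Measurable Ya := hpick.comp (hY₀.prodMk hY₁)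
  have hcond : HasCondDistrib Ya X (condDistrib Ya X P) P[|{ω | A ω = a}] := by
    have hjoint := (hunconf.comp hpick measurable_id).symm.hasCondDistrib_prodMkRight hX hYa hA
    have hpre : (fun ω ↦ (X ω, A ω)) ⁻¹' (univ ×ˢ {a}) = {ω | A ω = a} := by ext; simp
    have h := (hjoint.cond_preimage (hX.prodMk hA) hYa
      (MeasurableSet.univ.prod (measurableSet_singleton a))).comp_right (hf := measurable_fst)
    rwa [hpre] at h
  have hY : Y =ᵐ[P[|{ω | A ω = a}]] Ya := by
    filter_upwards [ae_cond_mem hs] with ω hω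
    rw [hYdef, show A ω = a from hω]
  have hpropensity : ∀ᵐ ω ∂P,
      ε ≤ (P⟦{ω | A ω = a} | MeasurableSpace.comap X inferInstance⟧) ω := by
    have hind :
        (fun ω ↦ if A ω = a then (1 : ℝ) else 0) = {ω | A ω = a}.indicator fun _ ↦ 1 := by
      ext ω; simp [indicator_apply]
    filter_upwards [hπver a, hoverlap a] with ω hπ hπε
    rw [← hind, hπ]
    exact hπε.1
  rw [condDistrib_congr_left hY]
  filter_upwards [(map_absolutelyContinuous_map_cond hX hs hε hpropensity).ae_le
    (condDistrib_ae_eq_of_measure_eq_compProd X hYa.aemeasurable hcond.map_eq)] with x hx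
  exact hx.symm

/-- Under consistency, unconfoundedness and strong overlap, for every `a ∈ {0,1}`
(encoded as `a : Bool`), the conditional distribution of the potential outcome `Y_a` given `X`
under `P` agrees, for `(P ∘ X⁻¹)`-almost every `x`, with the conditional distribution of the
observed outcome `Y` given `X` computed under the conditional measure `P(· | A = a)`:
`condDistrib (Y_a ∣ X; P) (x) = condDistrib (Y ∣ X; P(· | A = a)) (x)`. -/
theorem cdpo_identification
    {Ω : Type*} [MeasurableSpace Ω] [StandardBorelSpace Ω] [Nonempty Ω]
    (P : Measure Ω) [IsProbabilityMeasure P]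
    {𝒳 : Type*} [MeasurableSpace 𝒳] [StandardBorelSpace 𝒳]
    {𝒴 : Type*} [MeasurableSpace 𝒴] [StandardBorelSpace 𝒴] [Nonempty 𝒴]
    (X : Ω → 𝒳) (hX : Measurable X)
    (A : Ω → Bool) (hA : Measurable A)
    (Y₀ Y₁ : Ω → 𝒴) (hY₀ : Measurable Y₀) (hY₁ : Measurable Y₁)
    -- observed outcome (consistency)
    (Y : Ω → 𝒴) (hYdef : ∀ ω, Y ω = if A ω then Y₁ ω else Y₀ ω)
    -- propensity scores: σ(X)-measurable versions of E[𝟙{A = a} | σ(X)]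
    (π : Bool → 𝒳 → ℝ) (hπmeas : ∀ a, Measurable (π a))
    (hπver : ∀ a : Bool,
      P[fun ω => (if A ω = a then (1 : ℝ) else 0) | MeasurableSpace.comap X inferInstance]
        =ᵐ[P] fun ω => π a (X ω))
    -- strong overlap
    (ε : ℝ) (hε : 0 < ε)
    (hoverlap : ∀ a : Bool, ∀ᵐ ω ∂P, ε ≤ π a (X ω) ∧ π a (X ω) ≤ 1 - ε)
    -- unconfoundedness: (Y₀, Y₁) ⫫ A ∣ σ(X)
    (hunconf : CondIndepFun (MeasurableSpace.comap X inferInstance) hX.comap_le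
      (fun ω => (Y₀ ω, Y₁ ω)) A P) :
    ∀ a : Bool,
      ∀ᵐ x ∂(P.map X),
        condDistrib (fun ω => if a then Y₁ ω else Y₀ ω) X P x
          = condDistrib Y X (P[|{ω | A ω = a}]) x :=
  cdpo_identification_general P X hX A hA Y₀ Y₁ hY₀ hY₁ Y hYdef π hπver ε hε hoverlap hunconf
end

section
/- Conditional bias of the pseudo-density: for every fixed y ∈ 𝒴, a version of the conditional expectation of ξ̃(X, A, y) given σ(X) is ξ(y | X) + ((π_a(X) − π̂(X))/π̂(X)) · (ξ(y | X) − ξ̂(y | X)); in particular the conditional bias E[ξ̃(X, A, y) | σ(X)] − ξ(y | X) equals the product ((π_a(X) − π̂(X))/π̂(X)) (ξ(y | X) − ξ̂(y | X)) of the two nuisance errors, P-almost surely. -/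
/-!
Write the pseudo-density as `g * 𝟙{A = a} + ξ̂(y | X)` with `g := (ξ(y | X) − ξ̂(y | X)) / π̂(X)`.
Both `g` and `ξ̂(y | X)` are `σ(X)`-measurable, so `g` pulls out of the conditional expectation,
leaving `g * π_a(X) + ξ̂(y | X)`, which rearranges into `ξ(y | X)` plus the product of the two
nuisance errors.
-/

open MeasureTheory ProbabilityTheory

theorem div_mul_sub_add_eq_add_sub_div_mul {p q u v : ℝ} (hq : q ≠ 0) :
    p / q * (u - v) + v = u + (p - q) / q * (u - v) := by
  field_simp
  ring

theorem abs_sub_div_le_of_mem_Icc {c C ε u v q : ℝ} (hu : u ∈ Set.Icc c C)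
    (hv : v ∈ Set.Icc c C) (hε : 0 < ε) (hq : ε ≤ q) : |(u - v) / q| ≤ (C - c) / ε := by
  have hdiff : |u - v| ≤ C - c :=
    abs_sub_le_iff.2 ⟨by linarith [hu.2, hv.1], by linarith [hu.1, hv.2]⟩
  rw [abs_div, abs_of_pos (hε.trans_le hq)]
  exact div_le_div₀ ((abs_nonneg _).trans hdiff) hdiff hε hq

section PseudoDensity

variable {Ω : Type*} {m m₀ : MeasurableSpace Ω} {μ : Measure Ω}

theorem condExp_mul_add_of_stronglyMeasurable (hm : m ≤ m₀) [SigmaFinite (μ.trim hm)]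
    {f g h : Ω → ℝ} (hg : StronglyMeasurable[m] g) (hh : StronglyMeasurable[m] h)
    (hgf : Integrable (g * f) μ) (hf : Integrable f μ) (hhi : Integrable h μ) :
    μ[g * f + h | m] =ᵐ[μ] g * μ[f | m] + h := by
  filter_upwards [condExp_add hgf hhi m, condExp_mul_of_stronglyMeasurable_left hg hgf hf]
    with ω hadd hmul
  rw [hadd, Pi.add_apply, hmul, condExp_of_stronglyMeasurable hm hh hhi]
  rfl

theorem condExp_pseudoDensity [IsFiniteMeasure μ] (hm : m ≤ m₀) {f p q u v : Ω → ℝ}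
    {ε c C : ℝ} (hf : Integrable f μ) (hp : μ[f | m] =ᵐ[μ] p)
    (hq : Measurable[m] q) (hε : 0 < ε) (hεq : ∀ ω, ε ≤ q ω)
    (hu : Measurable[m] u) (hv : Measurable[m] v)
    (huC : ∀ ω, u ω ∈ Set.Icc c C) (hvC : ∀ ω, v ω ∈ Set.Icc c C) :
    μ[fun ω => f ω / q ω * (u ω - v ω) + v ω | m]
      =ᵐ[μ] fun ω => u ω + (p ω - q ω) / q ω * (u ω - v ω) := by
  set g : Ω → ℝ := fun ω => (u ω - v ω) / q ω
  have hg : Measurable[m] g := (hu.sub hv).div hq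
  have hgf : Integrable (g * f) μ :=
    hf.bdd_mul (hg.mono hm le_rfl).aestronglyMeasurable
      (ae_of_all _ fun ω => abs_sub_div_le_of_mem_Icc (huC ω) (hvC ω) hε (hεq ω))
  have hvi : Integrable v μ := .of_mem_Icc c C (hv.mono hm le_rfl).aemeasurable (ae_of_all _ hvC)
  have hsplit : (fun ω => f ω / q ω * (u ω - v ω) + v ω) = g * f + v := by
    funext ω
    simp only [g, Pi.add_apply, Pi.mul_apply]
    ring
  rw [hsplit]
  filter_upwards [condExp_mul_add_of_stronglyMeasurable hm hg.stronglyMeasurable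
    hv.stronglyMeasurable hgf hf hvi, hp] with ω hω hpω
  rw [hω, Pi.add_apply, Pi.mul_apply, hpω, ← div_mul_sub_add_eq_add_sub_div_mul
    (hε.trans_le (hεq ω)).ne']
  simp only [g]
  ring

end PseudoDensity

theorem gdr_pseudo_density_conditional_bias_general
    {Ω : Type*} [MeasurableSpace Ω]
    (P : Measure Ω) [IsProbabilityMeasure P]
    {𝒳 : Type*} [MeasurableSpace 𝒳]
    {𝒴 : Type*} [MeasurableSpace 𝒴]
    (X : Ω → 𝒳) (hX : Measurable X)
    (A : Ω → Bool) (hA : Measurable A)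
    (a : Bool)
    -- propensity score: σ(X)-measurable version of E[𝟙{A = a} | σ(X)]
    (π : 𝒳 → ℝ)
    (hπver : P[fun ω => (if A ω = a then (1 : ℝ) else 0) |
        MeasurableSpace.comap X inferInstance] =ᵐ[P] fun ω => π (X ω))
    -- strong overlap
    (ε : ℝ) (hε : 0 < ε)
    -- density setup
    (c C : ℝ)
    (ξ : 𝒴 × 𝒳 → ℝ) (hξmeas : Measurable ξ)
    (hξmem : ∀ q, ξ q ∈ Set.Icc c C)
    -- nuisance estimates
    (πh : 𝒳 → ℝ) (hπhmeas : Measurable πh) (hπhmem : ∀ x, πh x ∈ Set.Icc ε 1)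
    (ξh : 𝒴 × 𝒳 → ℝ) (hξhmeas : Measurable ξh)
    (hξhmem : ∀ q, ξh q ∈ Set.Icc c C) :
    ∀ y : 𝒴,
      (P[fun ω => ((if A ω = a then (1 : ℝ) else 0) / πh (X ω))
            * (ξ (y, X ω) - ξh (y, X ω)) + ξh (y, X ω) |
          MeasurableSpace.comap X inferInstance]
        =ᵐ[P] fun ω =>
          ξ (y, X ω) + ((π (X ω) - πh (X ω)) / πh (X ω)) * (ξ (y, X ω) - ξh (y, X ω)))
      ∧
      ((fun ω =>
          (P[fun ω' => ((if A ω' = a then (1 : ℝ) else 0) / πh (X ω'))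
              * (ξ (y, X ω') - ξh (y, X ω')) + ξh (y, X ω') |
            MeasurableSpace.comap X inferInstance]) ω - ξ (y, X ω))
        =ᵐ[P] fun ω =>
          ((π (X ω) - πh (X ω)) / πh (X ω)) * (ξ (y, X ω) - ξh (y, X ω))) := by
  intro y
  have hXσ : Measurable[MeasurableSpace.comap X inferInstance] X := comap_measurable X
  have hindicator : Integrable (fun ω => if A ω = a then (1 : ℝ) else 0) P :=
    .of_mem_Icc 0 1 (Measurable.ite (hA (measurableSet_singleton a)) measurable_const
      measurable_const).aemeasurable (ae_of_all _ fun ω => by split_ifs <;> norm_num)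
  have hcond := condExp_pseudoDensity hX.comap_le hindicator hπver (hπhmeas.comp hXσ) hε
    (fun ω => (hπhmem (X ω)).1) ((hξmeas.comp measurable_prodMk_left).comp hXσ)
    ((hξhmeas.comp measurable_prodMk_left).comp hXσ) (fun ω => hξmem (y, X ω)) (fun ω => hξhmem (y, X ω))
  refine ⟨hcond, ?_⟩
  filter_upwards [hcond] with ω hω
  exact sub_eq_of_eq_add' hω

/-- Conditional bias of the pseudo-density: for every fixed `y ∈ 𝒴`, a version of
the conditional expectation of `ξ̃(X, A, y)` given σ(X) is
`ξ(y | X) + ((π_a(X) − π̂(X))/π̂(X)) · (ξ(y | X) − ξ̂(y | X))`; in particular the conditional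
bias `E[ξ̃(X, A, y) | σ(X)] − ξ(y | X)` equals the product
`((π_a(X) − π̂(X))/π̂(X)) (ξ(y | X) − ξ̂(y | X))` of the two nuisance errors, P-a.s. -/
theorem gdr_pseudo_density_conditional_bias
    {Ω : Type*} [MeasurableSpace Ω]
    (P : Measure Ω) [IsProbabilityMeasure P]
    {𝒳 : Type*} [MeasurableSpace 𝒳] [StandardBorelSpace 𝒳]
    {𝒴 : Type*} [MeasurableSpace 𝒴] [StandardBorelSpace 𝒴]
    (X : Ω → 𝒳) (hX : Measurable X)
    (A : Ω → Bool) (hA : Measurable A)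
    (Y : Ω → 𝒴) (hY : Measurable Y)
    (a : Bool)
    -- propensity score: σ(X)-measurable version of E[𝟙{A = a} | σ(X)]
    (π : 𝒳 → ℝ) (hπmeas : Measurable π)
    (hπver : P[fun ω => (if A ω = a then (1 : ℝ) else 0) |
        MeasurableSpace.comap X inferInstance] =ᵐ[P] fun ω => π (X ω))
    -- strong overlap
    (ε : ℝ) (hε : 0 < ε)
    (hoverlap : ∀ᵐ ω ∂P, ε ≤ π (X ω) ∧ π (X ω) ≤ 1 - ε)
    -- density setup
    (ν : Measure 𝒴) [IsFiniteMeasure ν]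
    (c C : ℝ) (hc : 0 < c) (hcC : c ≤ C)
    (ξ : 𝒴 × 𝒳 → ℝ) (hξmeas : Measurable ξ)
    (hξmem : ∀ q, ξ q ∈ Set.Icc c C)
    (hξnorm : ∀ x, ∫ y, ξ (y, x) ∂ν = 1)
    -- nuisance estimates
    (πh : 𝒳 → ℝ) (hπhmeas : Measurable πh) (hπhmem : ∀ x, πh x ∈ Set.Icc ε 1)
    (ξh : 𝒴 × 𝒳 → ℝ) (hξhmeas : Measurable ξh)
    (hξhmem : ∀ q, ξh q ∈ Set.Icc c C)
    (hξhnorm : ∀ x, ∫ y, ξh (y, x) ∂ν = 1) :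
    ∀ y : 𝒴,
      (P[fun ω => ((if A ω = a then (1 : ℝ) else 0) / πh (X ω))
            * (ξ (y, X ω) - ξh (y, X ω)) + ξh (y, X ω) |
          MeasurableSpace.comap X inferInstance]
        =ᵐ[P] fun ω =>
          ξ (y, X ω) + ((π (X ω) - πh (X ω)) / πh (X ω)) * (ξ (y, X ω) - ξh (y, X ω)))
      ∧
      ((fun ω =>
          (P[fun ω' => ((if A ω' = a then (1 : ℝ) else 0) / πh (X ω'))
              * (ξ (y, X ω') - ξh (y, X ω')) + ξh (y, X ω') |
            MeasurableSpace.comap X inferInstance]) ω - ξ (y, X ω))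
        =ᵐ[P] fun ω =>
          ((π (X ω) - πh (X ω)) / πh (X ω)) * (ξ (y, X ω) - ξh (y, X ω))) :=
  gdr_pseudo_density_conditional_bias_general P X hX A hA a π hπver ε hε c C ξ hξmeas hξmem πh
    hπhmeas hπhmem ξh hξhmeas hξhmem
end

section
/- Second-order remainder identity: for every bounded measurable ℓ : 𝒴 × 𝒳 → ℝ, the difference between the doubly-robust risk and the target risk equals a product of nuisance errors: L_GDR(ℓ; π̂, ξ̂) − E[∫ ℓ(y, X) ξ(y | X) dν(y)] = E[((π_a(X) − π̂(X))/π̂(X)) · ∫ ℓ(y, X) (ξ(y | X) − ξ̂(y | X)) dν(y)]. -/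
/-!
Write `m = ∫ ℓ ξ dν` and `m̂ = ∫ ℓ ξ̂ dν` for the true and estimated conditional risks. The
doubly-robust integrand equals `𝟙{A = a} (ℓ(Y, X) − m̂(X)) / π̂(X) + m̂(X)`, and the density
identity turns the expectation of the first term into `E[π(X) (m(X) − m̂(X)) / π̂(X)]`, because `ξ`
integrates to one. Subtracting `E[m(X)]` leaves `E[(π(X) / π̂(X) − 1) (m(X) − m̂(X))]`, which is
the claimed product of the two nuisance errors.
-/

open MeasureTheory ProbabilityTheory

theorem integral_doublyRobust_sub_integral_eq {Ω : Type*} [MeasurableSpace Ω] {P : Measure Ω}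
    {D L G H p q : Ω → ℝ} (hp : ∀ ω, p ω ≠ 0)
    (hDL : Integrable (fun ω => D ω * ((L ω - G ω) / p ω)) P) (hG : Integrable G P)
    (hH : Integrable H P) (hqH : Integrable (fun ω => q ω * ((H ω - G ω) / p ω)) P)
    (hweight : ∫ ω, D ω * ((L ω - G ω) / p ω) ∂P = ∫ ω, q ω * ((H ω - G ω) / p ω) ∂P) :
    (∫ ω, D ω / p ω * L ω + (1 - D ω / p ω) * G ω ∂P) - ∫ ω, H ω ∂P
      = ∫ ω, (q ω - p ω) / p ω * (H ω - G ω) ∂P := by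
  calc (∫ ω, D ω / p ω * L ω + (1 - D ω / p ω) * G ω ∂P) - ∫ ω, H ω ∂P
      = (∫ ω, D ω * ((L ω - G ω) / p ω) + G ω ∂P) - ∫ ω, H ω ∂P := by
        congr 2 with ω
        ring
    _ = (∫ ω, q ω * ((H ω - G ω) / p ω) ∂P) + (∫ ω, G ω ∂P) - ∫ ω, H ω ∂P := by
        rw [integral_add hDL hG, hweight]
    _ = ∫ ω, q ω * ((H ω - G ω) / p ω) + G ω - H ω ∂P := by
        rw [← integral_add hqH hG]
        exact (integral_sub (hqH.add hG) hH).symm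
    _ = ∫ ω, (q ω - p ω) / p ω * (H ω - G ω) ∂P := by
        congr 1 with ω
        field_simp [hp ω]
        ring

theorem abs_sub_div_le {u v U V p ε : ℝ} (hu : |u| ≤ U) (hv : |v| ≤ V) (hε : 0 < ε)
    (hp : ε ≤ p) : |(u - v) / p| ≤ (U + V) / ε := by
  rw [abs_div, abs_of_pos (hε.trans_le hp)]
  exact div_le_div₀ (add_nonneg ((abs_nonneg _).trans hu) ((abs_nonneg _).trans hv))
    ((abs_sub _ _).trans (add_le_add hu hv)) hε hp

theorem abs_mul_le_mul_of_abs_le {a b B K : ℝ} (ha : |a| ≤ B) (hb : |b| ≤ K) :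
    |a * b| ≤ B * K := by
  rw [abs_mul]
  exact mul_le_mul ha hb (abs_nonneg _) ((abs_nonneg _).trans ha)

theorem Measurable.integrable_of_abs_le {α : Type*} [MeasurableSpace α] {μ : Measure α}
    [IsFiniteMeasure μ] {f : α → ℝ} {B : ℝ} (hf : Measurable f) (hB : ∀ x, |f x| ≤ B) :
    Integrable f μ :=
  .of_bound hf.aestronglyMeasurable B (ae_of_all _ hB)

section CondMean

variable {𝒳 𝒴 : Type*} [MeasurableSpace 𝒴] (ν : Measure 𝒴)

noncomputable def condMean (ξ ℓ : 𝒴 × 𝒳 → ℝ) (x : 𝒳) : ℝ :=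
  ∫ y, ℓ (y, x) * ξ (y, x) ∂ν

variable {ν} {ξ ξ' ℓ : 𝒴 × 𝒳 → ℝ} {B K : ℝ}

theorem measurable_condMean [MeasurableSpace 𝒳] [SFinite ν] (hξ : Measurable ξ)
    (hℓ : Measurable ℓ) : Measurable (condMean ν ξ ℓ) :=
  (hℓ.mul hξ).stronglyMeasurable.integral_prod_left'.measurable

theorem abs_condMean_le [IsFiniteMeasure ν] (hℓ : ∀ q, |ℓ q| ≤ B) (hξ : ∀ q, |ξ q| ≤ K)
    (x : 𝒳) : |condMean ν ξ ℓ x| ≤ B * K * ν.real Set.univ :=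
  norm_integral_le_of_norm_le_const (f := fun y => ℓ (y, x) * ξ (y, x))
    (ae_of_all _ fun _ => abs_mul_le_mul_of_abs_le (hℓ _) (hξ _))

theorem integrable_mul_section [MeasurableSpace 𝒳] [IsFiniteMeasure ν] (hξ : Measurable ξ)
    (hℓ : Measurable ℓ) (hξK : ∀ q, |ξ q| ≤ K) (hℓB : ∀ q, |ℓ q| ≤ B) (x : 𝒳) :
    Integrable (fun y => ℓ (y, x) * ξ (y, x)) ν :=
  ((hℓ.mul hξ).comp measurable_prodMk_right).integrable_of_abs_le fun _ =>
    abs_mul_le_mul_of_abs_le (hℓB _) (hξK _)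

theorem condMean_sub_condMean {x : 𝒳} (hℓξ : Integrable (fun y => ℓ (y, x) * ξ (y, x)) ν)
    (hℓξ' : Integrable (fun y => ℓ (y, x) * ξ' (y, x)) ν) :
    condMean ν ξ ℓ x - condMean ν ξ' ℓ x = ∫ y, ℓ (y, x) * (ξ (y, x) - ξ' (y, x)) ∂ν := by
  simp only [condMean, mul_sub]
  exact (integral_sub hℓξ hℓξ').symm

theorem condMean_sub_div {g p : 𝒳 → ℝ} {x : 𝒳} (hξ : Integrable (fun y => ξ (y, x)) ν)
    (hℓξ : Integrable (fun y => ℓ (y, x) * ξ (y, x)) ν) (hξ_one : ∫ y, ξ (y, x) ∂ν = 1) :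
    condMean ν ξ (fun q => (ℓ q - g q.2) / p q.2) x = (condMean ν ξ ℓ x - g x) / p x := by
  have hsplit : ∀ y, (ℓ (y, x) - g x) / p x * ξ (y, x)
      = (ℓ (y, x) * ξ (y, x) - g x * ξ (y, x)) / p x := fun y => by ring
  simp only [condMean, hsplit, integral_div, integral_sub hℓξ (hξ.const_mul (g x)),
    integral_const_mul, hξ_one, mul_one]

end CondMean

theorem gdr_second_order_remainder_general
    {Ω : Type*} [MeasurableSpace Ω]
    (P : Measure Ω) [IsProbabilityMeasure P]
    {𝒳 : Type*} [MeasurableSpace 𝒳]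
    {𝒴 : Type*} [MeasurableSpace 𝒴]
    (X : Ω → 𝒳) (hX : Measurable X)
    (A : Ω → Bool) (hA : Measurable A)
    (Y : Ω → 𝒴) (hY : Measurable Y)
    (a : Bool)
    -- propensity score: σ(X)-measurable version of E[𝟙{A = a} | σ(X)]
    (π : 𝒳 → ℝ)
    (hπver : P[fun ω => (if A ω = a then (1 : ℝ) else 0) |
        MeasurableSpace.comap X inferInstance] =ᵐ[P] fun ω => π (X ω))
    (ε : ℝ) (hε : 0 < ε)
    -- density setup
    (ν : Measure 𝒴) [IsFiniteMeasure ν]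
    (c C : ℝ)
    (ξ : 𝒴 × 𝒳 → ℝ) (hξmeas : Measurable ξ)
    (hξmem : ∀ q, ξ q ∈ Set.Icc c C)
    (hξnorm : ∀ x, ∫ y, ξ (y, x) ∂ν = 1)
    -- ξ is the conditional outcome density
    (hξdens : ∀ f : 𝒴 × 𝒳 → ℝ, Measurable f → (∃ B : ℝ, ∀ q, |f q| ≤ B) →
      ∫ ω, (if A ω = a then (1 : ℝ) else 0) * f (Y ω, X ω) ∂P
        = ∫ ω, π (X ω) * ∫ y, f (y, X ω) * ξ (y, X ω) ∂ν ∂P)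
    -- nuisance estimates
    (πh : 𝒳 → ℝ) (hπhmeas : Measurable πh) (hπhmem : ∀ x, πh x ∈ Set.Icc ε 1)
    (ξh : 𝒴 × 𝒳 → ℝ) (hξhmeas : Measurable ξh)
    (hξhmem : ∀ q, ξh q ∈ Set.Icc c C) :
    ∀ (ℓ : 𝒴 × 𝒳 → ℝ), Measurable ℓ → (∃ B : ℝ, ∀ q, |ℓ q| ≤ B) →
      (∫ ω, ((if A ω = a then (1 : ℝ) else 0) / πh (X ω)) * ℓ (Y ω, X ω)
          + (1 - (if A ω = a then (1 : ℝ) else 0) / πh (X ω))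
            * ∫ y, ℓ (y, X ω) * ξh (y, X ω) ∂ν ∂P)
        - ∫ ω, ∫ y, ℓ (y, X ω) * ξ (y, X ω) ∂ν ∂P
      = ∫ ω, ((π (X ω) - πh (X ω)) / πh (X ω))
          * ∫ y, ℓ (y, X ω) * (ξ (y, X ω) - ξh (y, X ω)) ∂ν ∂P := by
  intro ℓ hℓ ⟨B, hB⟩
  have hξK : ∀ q, |ξ q| ≤ max |c| |C| := fun q => abs_le_max_abs_abs (hξmem q).1 (hξmem q).2
  have hξhK : ∀ q, |ξh q| ≤ max |c| |C| := fun q => abs_le_max_abs_abs (hξhmem q).1 (hξhmem q).2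
  have hπh : ∀ x, ε ≤ πh x := fun x => (hπhmem x).1
  set m := condMean ν ξ ℓ
  set mh := condMean ν ξh ℓ
  have hm : ∀ x, |m x| ≤ _ := abs_condMean_le hB hξK
  have hmh : ∀ x, |mh x| ≤ _ := abs_condMean_le hB hξhK
  have hm_meas : Measurable m := measurable_condMean hξmeas hℓ
  have hmh_meas : Measurable mh := measurable_condMean hξhmeas hℓ
  set D : Ω → ℝ := fun ω => if A ω = a then 1 else 0
  have hD_meas : Measurable D :=
    (measurable_of_finite fun b => if b = a then (1 : ℝ) else 0).comp hA
  have hD : ∀ ω, |D ω| ≤ 1 := fun ω => by simp only [D]; split_ifs <;> simp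
  set f : 𝒴 × 𝒳 → ℝ := fun q => (ℓ q - mh q.2) / πh q.2
  have hf_meas : Measurable f :=
    (hℓ.sub (hmh_meas.comp measurable_snd)).div (hπhmeas.comp measurable_snd)
  have hf : ∀ q, |f q| ≤ _ := fun q => abs_sub_div_le (hB q) (hmh q.2) hε (hπh q.2)
  have hdens : ∫ ω, D ω * f (Y ω, X ω) ∂P
      = ∫ ω, π (X ω) * ((m (X ω) - mh (X ω)) / πh (X ω)) ∂P := by
    rw [hξdens f hf_meas ⟨_, hf⟩]
    congr 1 with ω
    exact congrArg _ <| condMean_sub_div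
      ((hξmeas.comp measurable_prodMk_right).integrable_of_abs_le fun _ => hξK _)
      (integrable_mul_section hξmeas hℓ hξK hB _) (hξnorm _)
  have hdiff : ∀ x, ∫ y, ℓ (y, x) * (ξ (y, x) - ξh (y, x)) ∂ν = m x - mh x := fun x =>
    (condMean_sub_condMean (integrable_mul_section hξmeas hℓ hξK hB x)
      (integrable_mul_section hξhmeas hℓ hξhK hB x)).symm
  simp only [hdiff]
  refine integral_doublyRobust_sub_integral_eq (D := D) (L := fun ω => ℓ (Y ω, X ω))
    (G := fun ω => mh (X ω)) (H := fun ω => m (X ω)) (p := fun ω => πh (X ω))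
    (fun ω => (hε.trans_le (hπh _)).ne')
    ((hD_meas.mul (hf_meas.comp (hY.prodMk hX))).integrable_of_abs_le fun ω =>
      abs_mul_le_mul_of_abs_le (hD ω) (hf _))
    ((hmh_meas.comp hX).integrable_of_abs_le fun _ => hmh _)
    ((hm_meas.comp hX).integrable_of_abs_le fun _ => hm _) ?_ hdens
  exact (integrable_condExp.congr hπver).mul_bdd
    (((hm_meas.sub hmh_meas).div hπhmeas).comp hX).aestronglyMeasurable
    (ae_of_all _ fun _ => abs_sub_div_le (hm _) (hmh _) hε (hπh _))

/-- Second-order remainder identity: for every bounded measurable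
`ℓ : 𝒴 × 𝒳 → ℝ`, the difference between the doubly-robust risk and the target risk equals a
product of nuisance errors:
`L_GDR(ℓ; π̂, ξ̂) − E[∫ ℓ(y, X) ξ(y | X) dν(y)]
   = E[((π_a(X) − π̂(X))/π̂(X)) · ∫ ℓ(y, X) (ξ(y | X) − ξ̂(y | X)) dν(y)]`. -/
theorem gdr_second_order_remainder
    {Ω : Type*} [MeasurableSpace Ω]
    (P : Measure Ω) [IsProbabilityMeasure P]
    {𝒳 : Type*} [MeasurableSpace 𝒳] [StandardBorelSpace 𝒳]
    {𝒴 : Type*} [MeasurableSpace 𝒴] [StandardBorelSpace 𝒴]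
    (X : Ω → 𝒳) (hX : Measurable X)
    (A : Ω → Bool) (hA : Measurable A)
    (Y : Ω → 𝒴) (hY : Measurable Y)
    (a : Bool)
    -- propensity score: σ(X)-measurable version of E[𝟙{A = a} | σ(X)]
    (π : 𝒳 → ℝ) (hπmeas : Measurable π)
    (hπver : P[fun ω => (if A ω = a then (1 : ℝ) else 0) |
        MeasurableSpace.comap X inferInstance] =ᵐ[P] fun ω => π (X ω))
    -- strong overlap
    (ε : ℝ) (hε : 0 < ε)
    (hoverlap : ∀ᵐ ω ∂P, ε ≤ π (X ω) ∧ π (X ω) ≤ 1 - ε)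
    -- density setup
    (ν : Measure 𝒴) [IsFiniteMeasure ν]
    (c C : ℝ) (hc : 0 < c) (hcC : c ≤ C)
    (ξ : 𝒴 × 𝒳 → ℝ) (hξmeas : Measurable ξ)
    (hξmem : ∀ q, ξ q ∈ Set.Icc c C)
    (hξnorm : ∀ x, ∫ y, ξ (y, x) ∂ν = 1)
    -- ξ is the conditional outcome density
    (hξdens : ∀ f : 𝒴 × 𝒳 → ℝ, Measurable f → (∃ B : ℝ, ∀ q, |f q| ≤ B) →
      ∫ ω, (if A ω = a then (1 : ℝ) else 0) * f (Y ω, X ω) ∂P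
        = ∫ ω, π (X ω) * ∫ y, f (y, X ω) * ξ (y, X ω) ∂ν ∂P)
    -- nuisance estimates
    (πh : 𝒳 → ℝ) (hπhmeas : Measurable πh) (hπhmem : ∀ x, πh x ∈ Set.Icc ε 1)
    (ξh : 𝒴 × 𝒳 → ℝ) (hξhmeas : Measurable ξh)
    (hξhmem : ∀ q, ξh q ∈ Set.Icc c C)
    (hξhnorm : ∀ x, ∫ y, ξh (y, x) ∂ν = 1) :
    ∀ (ℓ : 𝒴 × 𝒳 → ℝ), Measurable ℓ → (∃ B : ℝ, ∀ q, |ℓ q| ≤ B) →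
      (∫ ω, ((if A ω = a then (1 : ℝ) else 0) / πh (X ω)) * ℓ (Y ω, X ω)
          + (1 - (if A ω = a then (1 : ℝ) else 0) / πh (X ω))
            * ∫ y, ℓ (y, X ω) * ξh (y, X ω) ∂ν ∂P)
        - ∫ ω, ∫ y, ℓ (y, X ω) * ξ (y, X ω) ∂ν ∂P
      = ∫ ω, ((π (X ω) - πh (X ω)) / πh (X ω))
          * ∫ y, ℓ (y, X ω) * (ξ (y, X ω) - ξh (y, X ω)) ∂ν ∂P :=
  gdr_second_order_remainder_general P X hX A hA Y hY a π hπver ε hε ν c C ξ hξmeas hξmem hξnorm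
    hξdens πh hπhmeas hπhmem ξh hξhmeas hξhmem
end

section
/- Double robustness of the GDR risk: if either π̂ = π_a holds P-almost surely, or ξ̂(y | X) = ξ(y | X) holds (P ⊗ ν)-almost everywhere, then for every bounded measurable ℓ : 𝒴 × 𝒳 → ℝ the doubly-robust risk recovers the target risk exactly: L_GDR(ℓ; π̂, ξ̂) = E[∫ ℓ(y, X) ξ(y | X) dν(y)]. -/
/-!
Write `g x = ∫ ℓ(y, x) ξ(y | x) dν(y)` and `ĝ x = ∫ ℓ(y, x) ξ̂(y | x) dν(y)`. The GDR integrand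
equals `ĝ(X) + 𝟙{A = a} (ℓ(Y, X) - ĝ(X)) / π̂(X)`, and the density identity turns the expectation
of the second summand into the bias `E[π(X) (g(X) - ĝ(X)) / π̂(X)]`. If `π̂ = π` this bias is
`E[g(X)] - E[ĝ(X)]`; if `ξ̂ = ξ` then `ĝ(X) = g(X)` and it vanishes. Either way the risk is
`E[g(X)]`.
-/

open MeasureTheory

theorem integral_sub_div_mul_of_integral_eq_one {𝒴 : Type*} [MeasurableSpace 𝒴]
    {ν : Measure 𝒴} {h ρ : 𝒴 → ℝ} (hhρ : Integrable (fun y => h y * ρ y) ν)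
    (hρ : Integrable ρ ν) (hρ1 : ∫ y, ρ y ∂ν = 1) (m p : ℝ) :
    ∫ y, (h y - m) / p * ρ y ∂ν = ((∫ y, h y * ρ y ∂ν) - m) / p := by
  have hrw : ∀ y, (h y - m) / p * ρ y = p⁻¹ * (h y * ρ y - m * ρ y) := fun y => by ring
  simp_rw [hrw]
  rw [integral_const_mul, integral_sub hhρ (hρ.const_mul m), integral_const_mul, hρ1, mul_one,
    div_eq_inv_mul]

noncomputable def condRisk {𝒳 𝒴 : Type*} [MeasurableSpace 𝒴] (ν : Measure 𝒴)
    (ℓ ξ : 𝒴 × 𝒳 → ℝ) (x : 𝒳) : ℝ :=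
  ∫ y, ℓ (y, x) * ξ (y, x) ∂ν

namespace condRisk

variable {Ω 𝒳 𝒴 : Type*} [MeasurableSpace Ω] [MeasurableSpace 𝒴]
  {ν : Measure 𝒴} {ℓ ξ : 𝒴 × 𝒳 → ℝ}

theorem measurable [MeasurableSpace 𝒳] [SFinite ν] (hℓ : Measurable ℓ) (hξ : Measurable ξ) :
    Measurable (condRisk ν ℓ ξ) :=
  ((hℓ.comp measurable_swap).mul (hξ.comp measurable_swap)).stronglyMeasurable
    |>.integral_prod_right' |>.measurable

theorem integrable_integrand [MeasurableSpace 𝒳] [IsFiniteMeasure ν] (hℓ : Measurable ℓ)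
    (hξ : Measurable ξ) {B D : ℝ} (hℓB : ∀ q, |ℓ q| ≤ B) (hξD : ∀ q, |ξ q| ≤ D) (x : 𝒳) :
    Integrable (fun y => ℓ (y, x) * ξ (y, x)) ν := by
  refine .of_bound ((hℓ.comp measurable_prodMk_right).mul
    (hξ.comp measurable_prodMk_right)).aestronglyMeasurable (B * D) (.of_forall fun y => ?_)
  rw [Real.norm_eq_abs, abs_mul]
  exact mul_le_mul (hℓB _) (hξD _) (abs_nonneg _) ((abs_nonneg _).trans (hℓB (y, x)))

theorem abs_le [IsFiniteMeasure ν] {B D : ℝ} (hℓB : ∀ q, |ℓ q| ≤ B) (hξD : ∀ q, |ξ q| ≤ D)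
    (x : 𝒳) : |condRisk ν ℓ ξ x| ≤ B * D * ν.real Set.univ := by
  rw [condRisk, ← Real.norm_eq_abs]
  refine norm_integral_le_of_norm_le_const (.of_forall fun y => ?_)
  rw [Real.norm_eq_abs, abs_mul]
  exact mul_le_mul (hℓB _) (hξD _) (abs_nonneg _) ((abs_nonneg _).trans (hℓB (y, x)))

theorem integrable_comp [MeasurableSpace 𝒳] {P : Measure Ω} [IsFiniteMeasure P]
    [IsFiniteMeasure ν] {X : Ω → 𝒳} (hX : Measurable X) (hℓ : Measurable ℓ)
    (hξ : Measurable ξ) {B D : ℝ} (hℓB : ∀ q, |ℓ q| ≤ B) (hξD : ∀ q, |ξ q| ≤ D) :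
    Integrable (fun ω => condRisk ν ℓ ξ (X ω)) P :=
  .of_bound ((measurable hℓ hξ).comp hX).aestronglyMeasurable (B * D * ν.real Set.univ)
    (.of_forall fun ω => abs_le hℓB hξD (X ω))

theorem comp_ae_eq_of_ae_eq_prod [SFinite ν] {P : Measure Ω} {X : Ω → 𝒳} {ξ' : 𝒴 × 𝒳 → ℝ}
    (h : ∀ᵐ q ∂P.prod ν, ξ' (q.2, X q.1) = ξ (q.2, X q.1)) :
    (fun ω => condRisk ν ℓ ξ' (X ω)) =ᵐ[P] fun ω => condRisk ν ℓ ξ (X ω) := by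
  filter_upwards [Measure.ae_ae_of_ae_prod h] with ω hω
  exact integral_congr_ae (hω.mono fun y hy => by simp only [hy])

end condRisk

noncomputable def ipwResidual {𝒳 𝒴 : Type*} (ℓ : 𝒴 × 𝒳 → ℝ) (m πh : 𝒳 → ℝ) (q : 𝒴 × 𝒳) : ℝ :=
  (ℓ q - m q.2) / πh q.2

namespace ipwResidual

variable {Ω 𝒳 𝒴 : Type*} {ℓ : 𝒴 × 𝒳 → ℝ} {m πh : 𝒳 → ℝ}

theorem abs_le {B M ε : ℝ} (hℓB : ∀ q, |ℓ q| ≤ B) (hmM : ∀ x, |m x| ≤ M) (hε : 0 < ε)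
    (hπh : ∀ x, ε ≤ πh x) (q : 𝒴 × 𝒳) : |ipwResidual ℓ m πh q| ≤ (B + M) / ε := by
  rw [ipwResidual, abs_div, abs_of_pos (hε.trans_le (hπh q.2))]
  exact div_le_div₀ (by linarith [abs_nonneg (ℓ q), hℓB q, abs_nonneg (m q.2), hmM q.2])
    ((abs_sub _ _).trans (add_le_add (hℓB q) (hmM q.2))) hε (hπh q.2)

variable [MeasurableSpace 𝒳] [MeasurableSpace 𝒴]

theorem measurable (hℓ : Measurable ℓ) (hm : Measurable m) (hπh : Measurable πh) :
    Measurable (ipwResidual ℓ m πh) :=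
  (hℓ.sub (hm.comp measurable_snd)).div (hπh.comp measurable_snd)

theorem integral_mul_density {ν : Measure 𝒴} [IsFiniteMeasure ν] {ξ : 𝒴 × 𝒳 → ℝ}
    (hℓ : Measurable ℓ) (hξ : Measurable ξ) {B D : ℝ} (hℓB : ∀ q, |ℓ q| ≤ B)
    (hξD : ∀ q, |ξ q| ≤ D) (x : 𝒳) (hξ1 : ∫ y, ξ (y, x) ∂ν = 1) :
    ∫ y, ipwResidual ℓ m πh (y, x) * ξ (y, x) ∂ν = (condRisk ν ℓ ξ x - m x) / πh x :=
  integral_sub_div_mul_of_integral_eq_one (condRisk.integrable_integrand hℓ hξ hℓB hξD x)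
    (.of_bound (hξ.comp measurable_prodMk_right).aestronglyMeasurable D
      (.of_forall fun y => hξD (y, x))) hξ1 (m x) (πh x)

theorem integral_indicator_mul [MeasurableSpace Ω] {P : Measure Ω} {ν : Measure 𝒴}
    [IsFiniteMeasure ν] {X : Ω → 𝒳} {A : Ω → Bool} {Y : Ω → 𝒴} {a : Bool} {π : 𝒳 → ℝ}
    {ξ : 𝒴 × 𝒳 → ℝ} (hξ : Measurable ξ) {D : ℝ} (hξD : ∀ q, |ξ q| ≤ D)
    (hξ1 : ∀ x, ∫ y, ξ (y, x) ∂ν = 1)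
    (hξdens : ∀ f : 𝒴 × 𝒳 → ℝ, Measurable f → (∃ B : ℝ, ∀ q, |f q| ≤ B) →
      ∫ ω, (if A ω = a then (1 : ℝ) else 0) * f (Y ω, X ω) ∂P
        = ∫ ω, π (X ω) * ∫ y, f (y, X ω) * ξ (y, X ω) ∂ν ∂P)
    (hℓ : Measurable ℓ) (hm : Measurable m) (hπh : Measurable πh) {B M ε : ℝ}
    (hℓB : ∀ q, |ℓ q| ≤ B) (hmM : ∀ x, |m x| ≤ M) (hε : 0 < ε) (hπhε : ∀ x, ε ≤ πh x) :
    ∫ ω, (if A ω = a then (1 : ℝ) else 0) * ipwResidual ℓ m πh (Y ω, X ω) ∂P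
      = ∫ ω, π (X ω) * ((condRisk ν ℓ ξ (X ω) - m (X ω)) / πh (X ω)) ∂P := by
  rw [hξdens _ (measurable hℓ hm hπh) ⟨_, abs_le hℓB hmM hε hπhε⟩]
  simp_rw [integral_mul_density hℓ hξ hℓB hξD _ (hξ1 _)]

end ipwResidual

theorem integral_gdr_eq_add_bias {Ω 𝒳 𝒴 : Type*} [MeasurableSpace Ω] [MeasurableSpace 𝒳]
    [MeasurableSpace 𝒴] {P : Measure Ω} [IsFiniteMeasure P] {ν : Measure 𝒴} [IsFiniteMeasure ν]
    {X : Ω → 𝒳} {A : Ω → Bool} {Y : Ω → 𝒴} (hX : Measurable X) (hA : Measurable A)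
    (hY : Measurable Y) {a : Bool} {π : 𝒳 → ℝ} {ξ : 𝒴 × 𝒳 → ℝ} (hξ : Measurable ξ) {D : ℝ}
    (hξD : ∀ q, |ξ q| ≤ D) (hξ1 : ∀ x, ∫ y, ξ (y, x) ∂ν = 1)
    (hξdens : ∀ f : 𝒴 × 𝒳 → ℝ, Measurable f → (∃ B : ℝ, ∀ q, |f q| ≤ B) →
      ∫ ω, (if A ω = a then (1 : ℝ) else 0) * f (Y ω, X ω) ∂P
        = ∫ ω, π (X ω) * ∫ y, f (y, X ω) * ξ (y, X ω) ∂ν ∂P)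
    {πh : 𝒳 → ℝ} (hπh : Measurable πh) {ε : ℝ} (hε : 0 < ε) (hπhε : ∀ x, ε ≤ πh x)
    {ξh : 𝒴 × 𝒳 → ℝ} (hξh : Measurable ξh) {Dh : ℝ} (hξhD : ∀ q, |ξh q| ≤ Dh)
    {ℓ : 𝒴 × 𝒳 → ℝ} (hℓ : Measurable ℓ) {B : ℝ} (hℓB : ∀ q, |ℓ q| ≤ B) :
    ∫ ω, ((if A ω = a then (1 : ℝ) else 0) / πh (X ω)) * ℓ (Y ω, X ω)
        + (1 - (if A ω = a then (1 : ℝ) else 0) / πh (X ω))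
          * ∫ y, ℓ (y, X ω) * ξh (y, X ω) ∂ν ∂P
      = (∫ ω, condRisk ν ℓ ξh (X ω) ∂P)
        + ∫ ω, π (X ω) * ((condRisk ν ℓ ξ (X ω) - condRisk ν ℓ ξh (X ω)) / πh (X ω)) ∂P := by
  set gh := condRisk ν ℓ ξh
  have hgh : Measurable gh := condRisk.measurable hℓ hξh
  have hghB (x) : |gh x| ≤ B * Dh * ν.real Set.univ := condRisk.abs_le hℓB hξhD x
  have hindicator : Measurable fun ω => if A ω = a then (1 : ℝ) else 0 :=
    .ite (hA (measurableSet_singleton a)) measurable_const measurable_const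
  have hres : Integrable (fun ω => ipwResidual ℓ gh πh (Y ω, X ω)) P :=
    .of_bound ((ipwResidual.measurable hℓ hgh hπh).comp (hY.prodMk hX)).aestronglyMeasurable _
      (.of_forall fun ω => ipwResidual.abs_le hℓB hghB hε hπhε _)
  calc _ = ∫ ω, gh (X ω) + (if A ω = a then (1 : ℝ) else 0) * ipwResidual ℓ gh πh (Y ω, X ω) ∂P :=
        integral_congr_ae (.of_forall fun ω => by simp only [ipwResidual, gh, condRisk]; ring)
    _ = _ := by
        rw [integral_add (condRisk.integrable_comp hX hℓ hξh hℓB hξhD)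
          (hres.bdd_mul hindicator.aestronglyMeasurable (c := 1)
            (.of_forall fun ω => by split_ifs <;> simp)),
          ipwResidual.integral_indicator_mul hξ hξD hξ1 hξdens hℓ hgh hπh hℓB hghB hε hπhε]

theorem gdr_double_robustness_general
    {Ω : Type*} [MeasurableSpace Ω]
    (P : Measure Ω) [IsProbabilityMeasure P]
    {𝒳 : Type*} [MeasurableSpace 𝒳]
    {𝒴 : Type*} [MeasurableSpace 𝒴]
    (X : Ω → 𝒳) (hX : Measurable X)
    (A : Ω → Bool) (hA : Measurable A)
    (Y : Ω → 𝒴) (hY : Measurable Y)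
    (a : Bool)
    -- propensity score: σ(X)-measurable version of E[𝟙{A = a} | σ(X)]
    (π : 𝒳 → ℝ)
    -- strong overlap
    (ε : ℝ) (hε : 0 < ε)
    -- density setup
    (ν : Measure 𝒴) [IsFiniteMeasure ν]
    (c C : ℝ)
    (ξ : 𝒴 × 𝒳 → ℝ) (hξmeas : Measurable ξ)
    (hξmem : ∀ q, ξ q ∈ Set.Icc c C)
    (hξnorm : ∀ x, ∫ y, ξ (y, x) ∂ν = 1)
    -- ξ is the conditional outcome density
    (hξdens : ∀ f : 𝒴 × 𝒳 → ℝ, Measurable f → (∃ B : ℝ, ∀ q, |f q| ≤ B) →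
      ∫ ω, (if A ω = a then (1 : ℝ) else 0) * f (Y ω, X ω) ∂P
        = ∫ ω, π (X ω) * ∫ y, f (y, X ω) * ξ (y, X ω) ∂ν ∂P)
    -- nuisance estimates
    (πh : 𝒳 → ℝ) (hπhmeas : Measurable πh) (hπhmem : ∀ x, πh x ∈ Set.Icc ε 1)
    (ξh : 𝒴 × 𝒳 → ℝ) (hξhmeas : Measurable ξh)
    (hξhmem : ∀ q, ξh q ∈ Set.Icc c C) :
    ((∀ᵐ ω ∂P, πh (X ω) = π (X ω)) ∨
      (∀ᵐ q ∂(P.prod ν), ξh (q.2, X q.1) = ξ (q.2, X q.1))) →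
    ∀ (ℓ : 𝒴 × 𝒳 → ℝ), Measurable ℓ → (∃ B : ℝ, ∀ q, |ℓ q| ≤ B) →
      ∫ ω, ((if A ω = a then (1 : ℝ) else 0) / πh (X ω)) * ℓ (Y ω, X ω)
          + (1 - (if A ω = a then (1 : ℝ) else 0) / πh (X ω))
            * ∫ y, ℓ (y, X ω) * ξh (y, X ω) ∂ν ∂P
        = ∫ ω, ∫ y, ℓ (y, X ω) * ξ (y, X ω) ∂ν ∂P := by
  rintro hrobust ℓ hℓ ⟨B, hℓB⟩
  have hξD (q) : |ξ q| ≤ max |c| |C| := abs_le_max_abs_abs (hξmem q).1 (hξmem q).2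
  have hξhD (q) : |ξh q| ≤ max |c| |C| := abs_le_max_abs_abs (hξhmem q).1 (hξhmem q).2
  have hπhε (x) : ε ≤ πh x := (hπhmem x).1
  rw [integral_gdr_eq_add_bias hX hA hY hξmeas hξD hξnorm hξdens hπhmeas hε hπhε hξhmeas hξhD
    hℓ hℓB]
  set g := condRisk ν ℓ ξ
  set gh := condRisk ν ℓ ξh
  rcases hrobust with hπ | hξ
  · have hbias : ∀ᵐ ω ∂P, π (X ω) * ((g (X ω) - gh (X ω)) / πh (X ω)) = g (X ω) - gh (X ω) :=
      hπ.mono fun ω hω => by rw [← hω, mul_div_cancel₀ _ (hε.trans_le (hπhε _)).ne']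
    rw [integral_congr_ae hbias, integral_sub (condRisk.integrable_comp hX hℓ hξmeas hℓB hξD)
      (condRisk.integrable_comp hX hℓ hξhmeas hℓB hξhD), add_sub_cancel]
    rfl
  · have hgh : (fun ω => gh (X ω)) =ᵐ[P] fun ω => g (X ω) :=
      condRisk.comp_ae_eq_of_ae_eq_prod hξ
    have hbias : ∀ᵐ ω ∂P, π (X ω) * ((g (X ω) - gh (X ω)) / πh (X ω)) = 0 :=
      hgh.mono fun ω (hω : gh (X ω) = g (X ω)) => by rw [hω, sub_self, zero_div, mul_zero]
    rw [integral_congr_ae hbias, integral_zero, add_zero, integral_congr_ae hgh]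
    rfl

/-- Double robustness of the GDR risk: if either `π̂ = π_a` holds P-a.s., or
`ξ̂(y | X) = ξ(y | X)` holds (P ⊗ ν)-a.e., then for every bounded measurable
`ℓ : 𝒴 × 𝒳 → ℝ` the doubly-robust risk recovers the target risk exactly:
`L_GDR(ℓ; π̂, ξ̂) = E[∫ ℓ(y, X) ξ(y | X) dν(y)]`. -/
theorem gdr_double_robustness
    {Ω : Type*} [MeasurableSpace Ω]
    (P : Measure Ω) [IsProbabilityMeasure P]
    {𝒳 : Type*} [MeasurableSpace 𝒳] [StandardBorelSpace 𝒳]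
    {𝒴 : Type*} [MeasurableSpace 𝒴] [StandardBorelSpace 𝒴]
    (X : Ω → 𝒳) (hX : Measurable X)
    (A : Ω → Bool) (hA : Measurable A)
    (Y : Ω → 𝒴) (hY : Measurable Y)
    (a : Bool)
    -- propensity score: σ(X)-measurable version of E[𝟙{A = a} | σ(X)]
    (π : 𝒳 → ℝ) (hπmeas : Measurable π)
    (hπver : P[fun ω => (if A ω = a then (1 : ℝ) else 0) |
        MeasurableSpace.comap X inferInstance] =ᵐ[P] fun ω => π (X ω))
    -- strong overlap
    (ε : ℝ) (hε : 0 < ε)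
    (hoverlap : ∀ᵐ ω ∂P, ε ≤ π (X ω) ∧ π (X ω) ≤ 1 - ε)
    -- density setup
    (ν : Measure 𝒴) [IsFiniteMeasure ν]
    (c C : ℝ) (hc : 0 < c) (hcC : c ≤ C)
    (ξ : 𝒴 × 𝒳 → ℝ) (hξmeas : Measurable ξ)
    (hξmem : ∀ q, ξ q ∈ Set.Icc c C)
    (hξnorm : ∀ x, ∫ y, ξ (y, x) ∂ν = 1)
    -- ξ is the conditional outcome density
    (hξdens : ∀ f : 𝒴 × 𝒳 → ℝ, Measurable f → (∃ B : ℝ, ∀ q, |f q| ≤ B) →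
      ∫ ω, (if A ω = a then (1 : ℝ) else 0) * f (Y ω, X ω) ∂P
        = ∫ ω, π (X ω) * ∫ y, f (y, X ω) * ξ (y, X ω) ∂ν ∂P)
    -- nuisance estimates
    (πh : 𝒳 → ℝ) (hπhmeas : Measurable πh) (hπhmem : ∀ x, πh x ∈ Set.Icc ε 1)
    (ξh : 𝒴 × 𝒳 → ℝ) (hξhmeas : Measurable ξh)
    (hξhmem : ∀ q, ξh q ∈ Set.Icc c C)
    (hξhnorm : ∀ x, ∫ y, ξh (y, x) ∂ν = 1) :
    ((∀ᵐ ω ∂P, πh (X ω) = π (X ω)) ∨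
      (∀ᵐ q ∂(P.prod ν), ξh (q.2, X q.1) = ξ (q.2, X q.1))) →
    ∀ (ℓ : 𝒴 × 𝒳 → ℝ), Measurable ℓ → (∃ B : ℝ, ∀ q, |ℓ q| ≤ B) →
      ∫ ω, ((if A ω = a then (1 : ℝ) else 0) / πh (X ω)) * ℓ (Y ω, X ω)
          + (1 - (if A ω = a then (1 : ℝ) else 0) / πh (X ω))
            * ∫ y, ℓ (y, X ω) * ξh (y, X ω) ∂ν ∂P
        = ∫ ω, ∫ y, ℓ (y, X ω) * ξ (y, X ω) ∂ν ∂P :=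
  gdr_double_robustness_general P X hX A hA Y hY a π ε hε ν c C ξ hξmeas hξmem hξnorm hξdens πh
    hπhmeas hπhmem ξh hξhmeas hξhmem
end

section
/- Neyman-orthogonality of the GDR risk for conditional normalizing flows: let p*, p : 𝒴 × 𝒳 → [c, C] be measurable candidate conditional densities (∫ p*(y|x) dν(y) = ∫ p(y|x) dν(y) = 1 for all x). For s, t in a neighborhood of 0 define the perturbed nuisances π_s := π_a + s(π̂ − π_a), ξ_s := ξ + s(ξ̂ − ξ), the perturbed target p_t := p* + t(p − p*), and the risk G(s, t) := E[(𝟙{A = a}/π_s(X)) log p_t(Y | X) + (1 − 𝟙{A = a}/π_s(X)) ∫ log p_t(y | X) ξ_s(y | X) dν(y)]. Then there is δ > 0 such that G is well defined for |s|, |t| < δ, for each such s the partial derivative ∂_t G(s, t)|_{t=0} exists, the map s ↦ ∂_t G(s, 0) is differentiable at s = 0, and the mixed pathwise derivative vanishes: (d/ds)|_{s=0} (d/dt)|_{t=0} G(s, t) = 0. -/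
/-!
Applying the density identity `E[𝟙{A = a} g(Y, X)] = E[π(X) ∫ g(y, X) ξ(y | X) dν(y)]` to the
inverse-propensity part of the GDR loss turns the risk into
`G(s, t) = E ∫ log p_t(y | X) κ_s(y | X) dν(y)` with `κ_s = ξ + (1 - π / π_s) (ξ_s - ξ)`:
the bias of the doubly robust loss is the product of the two nuisance errors. Both factors are
`O(s)`, so `κ_s = ξ + O(s²)`; hence `∂ₜ G(s, 0) = E ∫ ((p - p*) / p*) κ_s dν` moves only by
`O(s²)` and its derivative at `s = 0` vanishes. Clamping `π` to `[ε, 1 - ε]` changes nothing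
`P`-a.e. and makes every integrand bounded, so all differentiations under the integral sign are
dominated.
-/

open MeasureTheory Filter Topology Set

lemma abs_log_le_max_of_mem_Icc {a b x : ℝ} (ha : 0 < a) (hx : x ∈ Icc a b) :
    |Real.log x| ≤ max |Real.log a| |Real.log b| := by
  have hlo := Real.log_le_log ha hx.1
  have hhi := Real.log_le_log (ha.trans_le hx.1) hx.2
  rw [abs_le]
  constructor <;> linarith [neg_abs_le (Real.log a), le_abs_self (Real.log b),
    le_max_left |Real.log a| |Real.log b|, le_max_right |Real.log a| |Real.log b|]

lemma add_mul_sub_mem_Icc {c C s u v : ℝ} (hc : 0 < c) (hs : |s| ≤ c / (2 * C))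
    (hu : u ∈ Icc c C) (hv : v ∈ Icc c C) : u + s * (v - u) ∈ Icc (c / 2) (2 * C) := by
  have hC : 0 < C := hc.trans_le (hu.1.trans hu.2)
  have hvu : |v - u| ≤ C - c := Real.dist_le_of_mem_Icc hv hu
  have hsvu : |s * (v - u)| ≤ c / 2 := by
    rw [abs_mul]
    calc |s| * |v - u| ≤ c / (2 * C) * (C - c) := by gcongr
      _ ≤ c / 2 := by
        rw [div_mul_eq_mul_div, div_le_div_iff₀ (by positivity) two_pos]
        nlinarith
  rw [abs_le] at hsvu
  constructor <;> linarith [hu.1, hu.2]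

lemma abs_one_sub_div_mul_le {a b u v s e B : ℝ} (he : 0 < e) (ha : a ∈ Icc e 1)
    (hb : b ∈ Icc e 1) (hs : |s| ≤ e / 2) (hvu : |v - u| ≤ B) :
    |(1 - a / (a + s * (b - a))) * (u + s * (v - u) - u)| ≤ 2 * B / e * s ^ 2 := by
  have hden : e / 2 ≤ a + s * (b - a) := by
    simpa using (add_mul_sub_mem_Icc he (by simpa using hs) ha hb).1
  have hden0 : 0 < a + s * (b - a) := by linarith
  have hba : |b - a| ≤ 1 := (Real.dist_le_of_mem_Icc hb ha).trans (by linarith [ha.1])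
  have hB : 0 ≤ B := (abs_nonneg _).trans hvu
  have key : (1 - a / (a + s * (b - a))) * (u + s * (v - u) - u)
      = s ^ 2 * ((b - a) * (v - u)) / (a + s * (b - a)) := by
    field_simp
    ring
  rw [key, abs_div, abs_mul, abs_mul, abs_of_nonneg (sq_nonneg s), abs_of_pos hden0]
  calc s ^ 2 * (|b - a| * |v - u|) / (a + s * (b - a)) ≤ s ^ 2 * (1 * B) / (e / 2) := by
        gcongr
    _ = 2 * B / e * s ^ 2 := by field_simp

lemma norm_le_of_mem_Icc {a b x : ℝ} (ha : 0 ≤ a) (hx : x ∈ Icc a b) : ‖x‖ ≤ b :=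
  (Real.norm_of_nonneg (ha.trans hx.1)).trans_le hx.2

lemma norm_div_le_div_of_le {a b A η : ℝ} (ha : ‖a‖ ≤ A) (hη : 0 < η) (hb : η ≤ b) :
    ‖a / b‖ ≤ A / η := by
  rw [norm_div, Real.norm_of_nonneg (hη.le.trans hb)]
  exact div_le_div₀ ((norm_nonneg a).trans ha) ha hη hb

lemma hasDerivAt_zero_of_abs_sub_le_mul_sq {f : ℝ → ℝ} {K : ℝ}
    (h : ∀ᶠ s in 𝓝 0, |f s - f 0| ≤ K * s ^ 2) : HasDerivAt f 0 0 := by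
  rw [hasDerivAt_iff_isLittleO_nhds_zero]
  simp only [zero_add, smul_zero, sub_zero]
  refine (Asymptotics.IsBigO.of_bound K ?_).trans_isLittleO
    (Asymptotics.isLittleO_pow_id one_lt_two)
  filter_upwards [h] with s hs
  simpa only [Real.norm_eq_abs, abs_of_nonneg (sq_nonneg s)] using hs

section ParametricIntegral

variable {α : Type*} [MeasurableSpace α] {μ : Measure α} [IsFiniteMeasure μ]

lemma hasDerivAt_integral_zero_of_abs_sub_le_mul_sq {F : ℝ → α → ℝ} {K : ℝ}
    (hF : ∀ s, AEStronglyMeasurable (F s) μ) (hF0 : Integrable (F 0) μ)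
    (h : ∀ᶠ s in 𝓝 0, ∀ a, |F s a - F 0 a| ≤ K * s ^ 2) :
    HasDerivAt (fun s => ∫ a, F s a ∂μ) 0 0 := by
  refine hasDerivAt_zero_of_abs_sub_le_mul_sq (K := K * μ.real univ) ?_
  filter_upwards [h] with s hs
  have hdiff : Integrable (fun a => F s a - F 0 a) μ :=
    .of_bound ((hF s).sub (hF 0)) _ (ae_of_all _ hs)
  have hFs : Integrable (F s) μ := (hdiff.add hF0).congr (ae_of_all _ fun a => sub_add_cancel _ _)
  rw [← integral_sub hFs hF0, ← Real.norm_eq_abs]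
  calc ‖∫ a, F s a - F 0 a ∂μ‖ ≤ K * s ^ 2 * μ.real univ :=
        norm_integral_le_of_norm_le_const (ae_of_all _ hs)
    _ = K * μ.real univ * s ^ 2 := by ring

theorem hasDerivAt_integral_log_lineMap_mul {u v w : α → ℝ} {c C B : ℝ} (hc : 0 < c)
    (hu : Measurable u) (hv : Measurable v) (hw : Measurable w) (hcC : c ≤ C)
    (huc : ∀ a, u a ∈ Icc c C) (hvc : ∀ a, v a ∈ Icc c C) (hwB : ∀ a, |w a| ≤ B) :
    HasDerivAt (fun t => ∫ a, Real.log (u a + t * (v a - u a)) * w a ∂μ)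
      (∫ a, (v a - u a) / u a * w a ∂μ) 0 := by
  have hC : 0 < C := hc.trans_le hcC
  have hmem : ∀ a, ∀ t ∈ Metric.ball (0 : ℝ) (c / (2 * C)),
      u a + t * (v a - u a) ∈ Icc (c / 2) (2 * C) := fun a t ht =>
    add_mul_sub_mem_Icc hc (by rw [mem_ball_zero_iff, Real.norm_eq_abs] at ht; exact ht.le)
      (huc a) (hvc a)
  have hvu : ∀ a, |v a - u a| ≤ C := fun a =>
    (Real.dist_le_of_mem_Icc (hvc a) (huc a)).trans (by linarith)
  have key := hasDerivAt_integral_of_dominated_loc_of_deriv_le (μ := μ)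
    (s := Metric.ball 0 (c / (2 * C)))
    (F := fun t a => Real.log (u a + t * (v a - u a)) * w a)
    (F' := fun t a => (v a - u a) / (u a + t * (v a - u a)) * w a)
    (bound := fun _ => C / (c / 2) * B) (Metric.ball_mem_nhds 0 (by positivity))
    (Eventually.of_forall fun t => (by fun_prop : Measurable _).aestronglyMeasurable) ?_
    (by fun_prop : Measurable _).aestronglyMeasurable (ae_of_all _ fun a t ht => ?_)
    (integrable_const _) (ae_of_all _ fun a t ht => ?_)
  · simpa using key.2
  · refine .of_bound (by fun_prop : Measurable _).aestronglyMeasurable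
      (max |Real.log c| |Real.log C| * B) (ae_of_all _ fun a => ?_)
    simp only [zero_mul, add_zero, norm_mul, Real.norm_eq_abs]
    exact mul_le_mul (abs_log_le_max_of_mem_Icc hc (huc a)) (hwB a) (abs_nonneg _)
      ((abs_nonneg _).trans (le_max_left _ _))
  · have hpos := (hmem a t ht).1
    rw [norm_mul, norm_div, Real.norm_eq_abs, Real.norm_eq_abs, Real.norm_eq_abs,
      abs_of_pos (a := u a + t * (v a - u a)) (by linarith)]
    exact mul_le_mul (div_le_div₀ hC.le (hvu a) (by positivity) hpos) (hwB a) (abs_nonneg _)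
      (by positivity)
  · have hline : HasDerivAt (fun t => u a + t * (v a - u a)) (v a - u a) t := by
      simpa using ((hasDerivAt_id t).mul_const (v a - u a)).const_add (u a)
    exact (hline.log (by linarith [(hmem a t ht).1])).mul_const (w a)

end ParametricIntegral

lemma integral_mul_add_one_sub_div_mul_sub {𝒴 : Type*} [MeasurableSpace 𝒴] {ν : Measure 𝒴}
    {φ ζ ζ' : 𝒴 → ℝ} (a b : ℝ) (hζ : ∫ y, ζ y ∂ν = 1) (hζi : Integrable ζ ν)
    (hφζ : Integrable (fun y => φ y * ζ y) ν) (hφζ' : Integrable (fun y => φ y * ζ' y) ν) :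
    ∫ y, φ y * (ζ y + (1 - a / b) * (ζ' y - ζ y)) ∂ν
      = ∫ y, φ y * ζ' y ∂ν + a * ∫ y, (φ y - ∫ y', φ y' * ζ' y' ∂ν) / b * ζ y ∂ν := by
  set g := ∫ y, φ y * ζ' y ∂ν
  calc ∫ y, φ y * (ζ y + (1 - a / b) * (ζ' y - ζ y)) ∂ν
      = ∫ y, (a / b * (φ y * ζ y) + (1 - a / b) * (φ y * ζ' y)) ∂ν := by
        congr 1; ext y; ring
    _ = a / b * ∫ y, φ y * ζ y ∂ν + (1 - a / b) * g := by
        rw [integral_add (hφζ.const_mul _) (hφζ'.const_mul _), integral_const_mul,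
          integral_const_mul]
    _ = g + a * ∫ y, (b⁻¹ * (φ y * ζ y) - g / b * ζ y) ∂ν := by
        rw [integral_sub (hφζ.const_mul _) (hζi.const_mul _), integral_const_mul,
          integral_const_mul, hζ]
        ring
    _ = g + a * ∫ y, (φ y - g) / b * ζ y ∂ν := by
        congr 3; ext y; ring

lemma norm_integral_prodMk_le {𝒳 𝒴 : Type*} [MeasurableSpace 𝒴] {ν : Measure 𝒴}
    [IsFiniteMeasure ν] {F : 𝒴 × 𝒳 → ℝ} {B : ℝ} (hFB : ∀ q, ‖F q‖ ≤ B) (x : 𝒳) :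
    ‖∫ y, F (y, x) ∂ν‖ ≤ B * ν.real univ :=
  norm_integral_le_of_norm_le_const (ae_of_all _ fun y => hFB (y, x))

section GDR

variable {Ω 𝒳 𝒴 : Type*} [MeasurableSpace Ω] [MeasurableSpace 𝒳] [MeasurableSpace 𝒴]

-- Eq. (7) of the paper for a pointwise loss `f` (there `f = log p_t`), with `ind ω = 𝟙{A ω = a}`.
noncomputable def gdrLoss (ν : Measure 𝒴) (X : Ω → 𝒳) (Y : Ω → 𝒴) (ind : Ω → ℝ) (π : 𝒳 → ℝ)
    (ξ f : 𝒴 × 𝒳 → ℝ) (ω : Ω) : ℝ :=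
  ind ω / π (X ω) * f (Y ω, X ω) + (1 - ind ω / π (X ω)) * ∫ y, f (y, X ω) * ξ (y, X ω) ∂ν

section FiniteMeasure

variable {ν : Measure 𝒴} [IsFiniteMeasure ν] {F : 𝒴 × 𝒳 → ℝ} {B : ℝ}

lemma measurable_integral_prodMk (hF : Measurable F) : Measurable fun x => ∫ y, F (y, x) ∂ν :=
  hF.stronglyMeasurable.integral_prod_left'.measurable

lemma integrable_prodMk (hF : Measurable F) (hFB : ∀ q, ‖F q‖ ≤ B) (x : 𝒳) :
    Integrable (fun y => F (y, x)) ν :=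
  .of_bound (hF.comp measurable_prodMk_right).aestronglyMeasurable B
    (ae_of_all _ fun y => hFB (y, x))

variable {P : Measure Ω} [IsFiniteMeasure P] {X : Ω → 𝒳} {Y : Ω → 𝒴} {ind : Ω → ℝ}
  {π π' : 𝒳 → ℝ} {ξ ξ' f : 𝒴 × 𝒳 → ℝ} {η Bi Bπ Bξ Bξ' Bf : ℝ}

lemma integrable_gdrLoss (hX : Measurable X) (hY : Measurable Y) (hind : Measurable ind)
    (hindB : ∀ ω, ‖ind ω‖ ≤ Bi) (hπ' : Measurable π') (hη : 0 < η) (hπ'η : ∀ x, η ≤ π' x)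
    (hξ' : Measurable ξ') (hξ'B : ∀ q, ‖ξ' q‖ ≤ Bξ') (hf : Measurable f) (hfB : ∀ q, ‖f q‖ ≤ Bf) :
    Integrable (gdrLoss ν X Y ind π' ξ' f) P := by
  have hgX := (measurable_integral_prodMk (ν := ν) (hf.mul hξ')).comp hX
  have hgB := norm_integral_prodMk_le (ν := ν) fun q => norm_mul_le_of_le (hfB q) (hξ'B q)
  have hW : ∀ ω, ‖ind ω / π' (X ω)‖ ≤ Bi / η := fun ω => norm_div_le_div_of_le (hindB ω) hη (hπ'η _)
  refine .of_bound (by unfold gdrLoss; fun_prop : Measurable _).aestronglyMeasurable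
    (Bi / η * Bf + (1 + Bi / η) * (Bf * Bξ' * ν.real univ)) (ae_of_all _ fun ω => ?_)
  exact norm_add_le_of_le (norm_mul_le_of_le (hW ω) (hfB _))
    (norm_mul_le_of_le (norm_sub_le_of_le norm_one.le (hW ω)) (hgB _))

theorem integral_gdrLoss_eq_integral_prod (hX : Measurable X) (hY : Measurable Y)
    (hind : Measurable ind) (hindB : ∀ ω, ‖ind ω‖ ≤ Bi) (hπ : Measurable π) (hπB : ∀ x, ‖π x‖ ≤ Bπ)
    (hξ : Measurable ξ) (hξB : ∀ q, ‖ξ q‖ ≤ Bξ) (hξnorm : ∀ x, ∫ y, ξ (y, x) ∂ν = 1)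
    (hdens : ∀ g : 𝒴 × 𝒳 → ℝ, Measurable g → (∃ B : ℝ, ∀ q, |g q| ≤ B) →
      ∫ ω, ind ω * g (Y ω, X ω) ∂P = ∫ ω, π (X ω) * ∫ y, g (y, X ω) * ξ (y, X ω) ∂ν ∂P)
    (hπ' : Measurable π') (hη : 0 < η) (hπ'η : ∀ x, η ≤ π' x)
    (hξ' : Measurable ξ') (hξ'B : ∀ q, ‖ξ' q‖ ≤ Bξ') (hf : Measurable f) (hfB : ∀ q, ‖f q‖ ≤ Bf) :
    ∫ ω, gdrLoss ν X Y ind π' ξ' f ω ∂P = ∫ z, f (z.2, X z.1) * (ξ (z.2, X z.1)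
      + (1 - π (X z.1) / π' (X z.1)) * (ξ' (z.2, X z.1) - ξ (z.2, X z.1))) ∂P.prod ν := by
  set g : 𝒳 → ℝ := fun x => ∫ y, f (y, x) * ξ' (y, x) ∂ν
  set h : 𝒴 × 𝒳 → ℝ := fun q => (f q - g q.2) / π' q.2
  have hg : Measurable g := measurable_integral_prodMk (hf.mul hξ')
  have hgB : ∀ x, ‖g x‖ ≤ Bf * Bξ' * ν.real univ :=
    norm_integral_prodMk_le fun q => norm_mul_le_of_le (hfB q) (hξ'B q)
  have hh : Measurable h := by fun_prop
  have hhB : ∀ q, ‖h q‖ ≤ (Bf + Bf * Bξ' * ν.real univ) / η := fun q =>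
    norm_div_le_div_of_le (norm_sub_le_of_le (hfB q) (hgB q.2)) hη (hπ'η q.2)
  have hhξ : Measurable fun ω => ∫ y, h (y, X ω) * ξ (y, X ω) ∂ν :=
    (measurable_integral_prodMk (hh.mul hξ)).comp hX
  have hgX : Integrable (fun ω => g (X ω)) P :=
    .of_bound (hg.comp hX).aestronglyMeasurable _ (ae_of_all _ fun ω => hgB (X ω))
  have hindh : Integrable (fun ω => ind ω * h (Y ω, X ω)) P :=
    .of_bound (by fun_prop : Measurable _).aestronglyMeasurable _
      (ae_of_all _ fun ω => norm_mul_le_of_le (hindB ω) (hhB _))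
  have hπhξ : Integrable (fun ω => π (X ω) * ∫ y, h (y, X ω) * ξ (y, X ω) ∂ν) P :=
    .of_bound (by fun_prop : Measurable _).aestronglyMeasurable _
      (ae_of_all _ fun ω => norm_mul_le_of_le (hπB _)
        (norm_integral_prodMk_le (fun q => norm_mul_le_of_le (hhB q) (hξB q)) _))
  have hκB : ∀ q, ‖f q * (ξ q + (1 - π q.2 / π' q.2) * (ξ' q - ξ q))‖
      ≤ Bf * (Bξ + (1 + Bπ / η) * (Bξ' + Bξ)) := fun q =>
    norm_mul_le_of_le (hfB q) (norm_add_le_of_le (hξB q) (norm_mul_le_of_le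
      (norm_sub_le_of_le norm_one.le (norm_div_le_div_of_le (hπB _) hη (hπ'η _)))
      (norm_sub_le_of_le (hξ'B q) (hξB q))))
  have hκ : Integrable (fun z : Ω × 𝒴 => f (z.2, X z.1) * (ξ (z.2, X z.1)
      + (1 - π (X z.1) / π' (X z.1)) * (ξ' (z.2, X z.1) - ξ (z.2, X z.1)))) (P.prod ν) :=
    .of_bound (by fun_prop : Measurable _).aestronglyMeasurable _ (ae_of_all _ fun z => hκB _)
  have hinner : ∀ x, ∫ y, f (y, x) * (ξ (y, x) + (1 - π x / π' x) * (ξ' (y, x) - ξ (y, x))) ∂ν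
      = g x + π x * ∫ y, h (y, x) * ξ (y, x) ∂ν := fun x =>
    integral_mul_add_one_sub_div_mul_sub _ _ (hξnorm x) (integrable_prodMk hξ hξB x)
      (integrable_prodMk (hf.mul hξ) (fun q => norm_mul_le_of_le (hfB q) (hξB q)) x)
      (integrable_prodMk (hf.mul hξ') (fun q => norm_mul_le_of_le (hfB q) (hξ'B q)) x)
  calc ∫ ω, gdrLoss ν X Y ind π' ξ' f ω ∂P
      = ∫ ω, (g (X ω) + ind ω * h (Y ω, X ω)) ∂P := by
        congr 1; ext ω; simp only [gdrLoss, h, g]; ring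
    _ = ∫ ω, (g (X ω) + π (X ω) * ∫ y, h (y, X ω) * ξ (y, X ω) ∂ν) ∂P := by
        rw [integral_add hgX hindh, integral_add hgX hπhξ, hdens h hh ⟨_, hhB⟩]
    _ = _ := by
        rw [integral_prod _ hκ]
        simp only [hinner]

end FiniteMeasure

theorem gdrLoss_neymanOrthogonal_of_forall_mem_Icc {P : Measure Ω} [IsFiniteMeasure P]
    {ν : Measure 𝒴} [IsFiniteMeasure ν] {X : Ω → 𝒳} {Y : Ω → 𝒴} {ind : Ω → ℝ}
    {π πh : 𝒳 → ℝ} {ξ ξh pstar p : 𝒴 × 𝒳 → ℝ} {ε c C : ℝ}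
    (hX : Measurable X) (hY : Measurable Y) (hind : Measurable ind) (hind1 : ∀ ω, ‖ind ω‖ ≤ 1)
    (hπ : Measurable π) (hπmem : ∀ x, π x ∈ Icc ε 1) (hε : 0 < ε) (hc : 0 < c) (hcC : c ≤ C)
    (hξ : Measurable ξ) (hξmem : ∀ q, ξ q ∈ Icc c C) (hξnorm : ∀ x, ∫ y, ξ (y, x) ∂ν = 1)
    (hdens : ∀ g : 𝒴 × 𝒳 → ℝ, Measurable g → (∃ B : ℝ, ∀ q, |g q| ≤ B) →
      ∫ ω, ind ω * g (Y ω, X ω) ∂P = ∫ ω, π (X ω) * ∫ y, g (y, X ω) * ξ (y, X ω) ∂ν ∂P)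
    (hπh : Measurable πh) (hπhmem : ∀ x, πh x ∈ Icc ε 1)
    (hξh : Measurable ξh) (hξhmem : ∀ q, ξh q ∈ Icc c C)
    (hpstar : Measurable pstar) (hpstarmem : ∀ q, pstar q ∈ Icc c C)
    (hp : Measurable p) (hpmem : ∀ q, p q ∈ Icc c C) :
    ∃ δ > (0 : ℝ),
      (∀ s t : ℝ, |s| < δ → |t| < δ →
        Integrable (gdrLoss ν X Y ind (fun x => π x + s * (πh x - π x))
          (fun q => ξ q + s * (ξh q - ξ q))
          (fun q => Real.log (pstar q + t * (p q - pstar q)))) P) ∧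
      ∃ D : ℝ → ℝ,
        (∀ s : ℝ, |s| < δ →
          HasDerivAt (fun t : ℝ => ∫ ω, gdrLoss ν X Y ind (fun x => π x + s * (πh x - π x))
            (fun q => ξ q + s * (ξh q - ξ q))
            (fun q => Real.log (pstar q + t * (p q - pstar q))) ω ∂P) (D s) 0) ∧
        HasDerivAt D 0 0 := by
  set δ := min (ε / 2) (c / (2 * C))
  have hδ : 0 < δ := lt_min (half_pos hε) (div_pos hc (by linarith))
  have hπs : ∀ s, |s| < δ → ∀ x, ε / 2 ≤ π x + s * (πh x - π x) := fun s hs x =>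
    (add_mul_sub_mem_Icc (C := 1) hε (by simpa using hs.le.trans (min_le_left _ _))
      (hπmem x) (hπhmem x)).1
  have hξs : ∀ s, |s| < δ → ∀ q, ‖ξ q + s * (ξh q - ξ q)‖ ≤ 2 * C := fun s hs q =>
    norm_le_of_mem_Icc (half_pos hc).le
      (add_mul_sub_mem_Icc hc (hs.le.trans (min_le_right _ _)) (hξmem q) (hξhmem q))
  have hlog : ∀ t, |t| < δ → ∀ q, ‖Real.log (pstar q + t * (p q - pstar q))‖
      ≤ max |Real.log (c / 2)| |Real.log (2 * C)| := fun t ht q =>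
    abs_log_le_max_of_mem_Icc (half_pos hc)
      (add_mul_sub_mem_Icc hc (ht.le.trans (min_le_right _ _)) (hpstarmem q) (hpmem q))
  set κ : ℝ → 𝒴 × 𝒳 → ℝ := fun s q =>
    ξ q + (1 - π q.2 / (π q.2 + s * (πh q.2 - π q.2))) * (ξ q + s * (ξh q - ξ q) - ξ q)
  have hκ : ∀ s, |s| < δ → ∀ q, ‖κ s q - ξ q‖ ≤ 2 * C / ε * s ^ 2 := fun s hs q => by
    simpa [κ] using abs_one_sub_div_mul_le hε (hπmem q.2) (hπhmem q.2)
      (hs.le.trans (min_le_left _ _))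
      ((Real.dist_le_of_mem_Icc (hξhmem q) (hξmem q)).trans (by linarith) : |ξh q - ξ q| ≤ C)
  have hκB : ∀ s, |s| < δ → ∀ q, ‖κ s q‖ ≤ C + 2 * C / ε * s ^ 2 := fun s hs q => by
    simpa using norm_add_le_of_le (norm_le_of_mem_Icc hc.le (hξmem q)) (hκ s hs q)
  have hr : ∀ q, ‖(p q - pstar q) / pstar q‖ ≤ C / c := fun q =>
    norm_div_le_div_of_le ((Real.dist_le_of_mem_Icc (hpmem q) (hpstarmem q)).trans (by linarith))
      hc (hpstarmem q).1
  refine ⟨δ, hδ, fun s t hs ht => integrable_gdrLoss hX hY hind hind1 (by fun_prop)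
    (half_pos hε) (hπs s hs) (by fun_prop) (hξs s hs) (by fun_prop) (hlog t ht),
    fun s => ∫ z, (p (z.2, X z.1) - pstar (z.2, X z.1)) / pstar (z.2, X z.1) * κ s (z.2, X z.1)
      ∂P.prod ν, fun s hs => ?_, ?_⟩
  · refine (hasDerivAt_integral_log_lineMap_mul hc (by fun_prop) (by fun_prop) (by fun_prop) hcC
      (fun z => hpstarmem _) (fun z => hpmem _) (fun z => hκB s hs _)).congr_of_eventuallyEq ?_
    filter_upwards [Metric.ball_mem_nhds (0 : ℝ) hδ] with t ht
    rw [mem_ball_zero_iff, Real.norm_eq_abs] at ht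
    exact integral_gdrLoss_eq_integral_prod hX hY hind hind1 hπ
      (fun x => norm_le_of_mem_Icc hε.le (hπmem x)) hξ (fun q => norm_le_of_mem_Icc hc.le (hξmem q))
      hξnorm hdens (by fun_prop) (half_pos hε) (hπs s hs) (by fun_prop) (hξs s hs) (by fun_prop)
      (hlog t ht)
  · have hκ0 : ∀ q, κ 0 q = ξ q := fun q => by simp [κ]
    refine hasDerivAt_integral_zero_of_abs_sub_le_mul_sq (K := C / c * (2 * C / ε))
      (F := fun s (z : Ω × 𝒴) =>
        (p (z.2, X z.1) - pstar (z.2, X z.1)) / pstar (z.2, X z.1) * κ s (z.2, X z.1))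
      (fun s => (by fun_prop : Measurable _).aestronglyMeasurable)
      (.of_bound (by fun_prop : Measurable _).aestronglyMeasurable _ (ae_of_all _ fun z =>
        norm_mul_le_of_le (hr _) (hκB 0 (by simpa using hδ) _))) ?_
    filter_upwards [Metric.ball_mem_nhds (0 : ℝ) hδ] with s hs z
    rw [mem_ball_zero_iff, Real.norm_eq_abs] at hs
    rw [hκ0, ← mul_sub, mul_assoc]
    exact norm_mul_le_of_le (hr _) (hκ s hs _)

end GDR

theorem gdr_neyman_orthogonality_cnf_general
    {Ω : Type*} [MeasurableSpace Ω]
    (P : Measure Ω) [IsProbabilityMeasure P]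
    {𝒳 : Type*} [MeasurableSpace 𝒳]
    {𝒴 : Type*} [MeasurableSpace 𝒴]
    (X : Ω → 𝒳) (hX : Measurable X)
    (A : Ω → Bool) (hA : Measurable A)
    (Y : Ω → 𝒴) (hY : Measurable Y)
    (a : Bool)
    -- propensity score: σ(X)-measurable version of E[𝟙{A = a} | σ(X)]
    (π : 𝒳 → ℝ) (hπmeas : Measurable π)
    -- strong overlap
    (ε : ℝ) (hε : 0 < ε)
    (hoverlap : ∀ᵐ ω ∂P, ε ≤ π (X ω) ∧ π (X ω) ≤ 1 - ε)
    -- density setup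
    (ν : Measure 𝒴) [IsFiniteMeasure ν]
    (c C : ℝ) (hc : 0 < c) (hcC : c ≤ C)
    (ξ : 𝒴 × 𝒳 → ℝ) (hξmeas : Measurable ξ)
    (hξmem : ∀ q, ξ q ∈ Set.Icc c C)
    (hξnorm : ∀ x, ∫ y, ξ (y, x) ∂ν = 1)
    -- ξ is the conditional outcome density
    (hξdens : ∀ f : 𝒴 × 𝒳 → ℝ, Measurable f → (∃ B : ℝ, ∀ q, |f q| ≤ B) →
      ∫ ω, (if A ω = a then (1 : ℝ) else 0) * f (Y ω, X ω) ∂P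
        = ∫ ω, π (X ω) * ∫ y, f (y, X ω) * ξ (y, X ω) ∂ν ∂P)
    -- nuisance estimates
    (πh : 𝒳 → ℝ) (hπhmeas : Measurable πh) (hπhmem : ∀ x, πh x ∈ Set.Icc ε 1)
    (ξh : 𝒴 × 𝒳 → ℝ) (hξhmeas : Measurable ξh)
    (hξhmem : ∀ q, ξh q ∈ Set.Icc c C)
    -- candidate conditional densities of the target model class
    (pstar p : 𝒴 × 𝒳 → ℝ)
    (hpstarmeas : Measurable pstar) (hpstarmem : ∀ q, pstar q ∈ Set.Icc c C)
    (hpmeas : Measurable p) (hpmem : ∀ q, p q ∈ Set.Icc c C) :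
    ∃ δ > (0 : ℝ),
      -- G is well defined for |s|, |t| < δ
      (∀ s t : ℝ, |s| < δ → |t| < δ →
        Integrable (fun ω =>
          ((if A ω = a then (1 : ℝ) else 0) / (π (X ω) + s * (πh (X ω) - π (X ω))))
            * Real.log (pstar (Y ω, X ω) + t * (p (Y ω, X ω) - pstar (Y ω, X ω)))
          + (1 - (if A ω = a then (1 : ℝ) else 0) / (π (X ω) + s * (πh (X ω) - π (X ω))))
            * ∫ y, Real.log (pstar (y, X ω) + t * (p (y, X ω) - pstar (y, X ω)))
                * (ξ (y, X ω) + s * (ξh (y, X ω) - ξ (y, X ω))) ∂ν) P)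
      ∧
      ∃ D : ℝ → ℝ,
        -- for each |s| < δ, ∂ₜ G(s, t)|_{t=0} exists and equals D s
        (∀ s : ℝ, |s| < δ →
          HasDerivAt (fun t : ℝ => ∫ ω,
            ((if A ω = a then (1 : ℝ) else 0) / (π (X ω) + s * (πh (X ω) - π (X ω))))
              * Real.log (pstar (Y ω, X ω) + t * (p (Y ω, X ω) - pstar (Y ω, X ω)))
            + (1 - (if A ω = a then (1 : ℝ) else 0) / (π (X ω) + s * (πh (X ω) - π (X ω))))
              * ∫ y, Real.log (pstar (y, X ω) + t * (p (y, X ω) - pstar (y, X ω)))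
                  * (ξ (y, X ω) + s * (ξh (y, X ω) - ξ (y, X ω))) ∂ν ∂P) (D s) 0)
        -- s ↦ ∂ₜ G(s, 0) is differentiable at s = 0 and its derivative there vanishes
        ∧ HasDerivAt D 0 0 := by
  obtain ⟨ω₀, hω₀⟩ := hoverlap.exists
  set π₀ : 𝒳 → ℝ := fun x => max ε (min (1 - ε) (π x))
  have hπ₀X : ∀ᵐ ω ∂P, π₀ (X ω) = π (X ω) :=
    hoverlap.mono fun ω h => by simp [π₀, h.1, h.2]
  have hπ₀mem : ∀ x, π₀ x ∈ Icc ε 1 := fun x =>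
    ⟨le_max_left _ _, max_le (by linarith [hω₀.1.trans hω₀.2])
      ((min_le_left _ _).trans (by linarith))⟩
  obtain ⟨δ, hδ, hint, D, hD, hD0⟩ := gdrLoss_neymanOrthogonal_of_forall_mem_Icc (P := P) (ν := ν)
    (ind := fun ω => if A ω = a then (1 : ℝ) else 0) hX hY
    (Measurable.ite (hA (measurableSet_singleton a)) measurable_const measurable_const)
    (fun ω => by split_ifs <;> simp) (by fun_prop) hπ₀mem hε hc hcC hξmeas hξmem hξnorm
    (fun g hg hgB => (hξdens g hg hgB).trans
      (integral_congr_ae (hπ₀X.mono fun ω h => by simp only [h])))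
    hπhmeas hπhmem hξhmeas hξhmem hpstarmeas hpstarmem hpmeas hpmem
  have hG : ∀ s t : ℝ, gdrLoss ν X Y (fun ω => if A ω = a then (1 : ℝ) else 0)
      (fun x => π₀ x + s * (πh x - π₀ x)) (fun q => ξ q + s * (ξh q - ξ q))
      (fun q => Real.log (pstar q + t * (p q - pstar q)))
      =ᵐ[P] gdrLoss ν X Y (fun ω => if A ω = a then (1 : ℝ) else 0)
      (fun x => π x + s * (πh x - π x)) (fun q => ξ q + s * (ξh q - ξ q))
      (fun q => Real.log (pstar q + t * (p q - pstar q))) := fun s t =>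
    hπ₀X.mono fun ω h => by simp only [gdrLoss, h]
  refine ⟨δ, hδ, fun s t hs ht => (hint s t hs ht).congr (hG s t), D, fun s hs => ?_, hD0⟩
  exact (hD s hs).congr_of_eventuallyEq
    (Eventually.of_forall fun t => (integral_congr_ae (hG s t)).symm)

/-- Neyman-orthogonality of the GDR risk for conditional normalizing flows:
with perturbed nuisances `π_s := π_a + s(π̂ − π_a)`, `ξ_s := ξ + s(ξ̂ − ξ)` and perturbed
target `p_t := p* + t(p − p*)`, the risk
`G(s, t) := E[(𝟙{A = a}/π_s(X)) log p_t(Y | X)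
             + (1 − 𝟙{A = a}/π_s(X)) ∫ log p_t(y | X) ξ_s(y | X) dν(y)]`
is well defined for `|s|, |t| < δ` (some δ > 0), the partial derivative `∂_t G(s, t)|_{t=0}`
exists for each such s, the map `s ↦ ∂_t G(s, 0)` is differentiable at `s = 0`, and the
mixed pathwise derivative vanishes: `(d/ds)|₀ (d/dt)|₀ G(s, t) = 0`. -/
theorem gdr_neyman_orthogonality_cnf
    {Ω : Type*} [MeasurableSpace Ω]
    (P : Measure Ω) [IsProbabilityMeasure P]
    {𝒳 : Type*} [MeasurableSpace 𝒳] [StandardBorelSpace 𝒳]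
    {𝒴 : Type*} [MeasurableSpace 𝒴] [StandardBorelSpace 𝒴]
    (X : Ω → 𝒳) (hX : Measurable X)
    (A : Ω → Bool) (hA : Measurable A)
    (Y : Ω → 𝒴) (hY : Measurable Y)
    (a : Bool)
    -- propensity score: σ(X)-measurable version of E[𝟙{A = a} | σ(X)]
    (π : 𝒳 → ℝ) (hπmeas : Measurable π)
    (hπver : P[fun ω => (if A ω = a then (1 : ℝ) else 0) |
        MeasurableSpace.comap X inferInstance] =ᵐ[P] fun ω => π (X ω))
    -- strong overlap
    (ε : ℝ) (hε : 0 < ε)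
    (hoverlap : ∀ᵐ ω ∂P, ε ≤ π (X ω) ∧ π (X ω) ≤ 1 - ε)
    -- density setup
    (ν : Measure 𝒴) [IsFiniteMeasure ν]
    (c C : ℝ) (hc : 0 < c) (hcC : c ≤ C)
    (ξ : 𝒴 × 𝒳 → ℝ) (hξmeas : Measurable ξ)
    (hξmem : ∀ q, ξ q ∈ Set.Icc c C)
    (hξnorm : ∀ x, ∫ y, ξ (y, x) ∂ν = 1)
    -- ξ is the conditional outcome density
    (hξdens : ∀ f : 𝒴 × 𝒳 → ℝ, Measurable f → (∃ B : ℝ, ∀ q, |f q| ≤ B) →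
      ∫ ω, (if A ω = a then (1 : ℝ) else 0) * f (Y ω, X ω) ∂P
        = ∫ ω, π (X ω) * ∫ y, f (y, X ω) * ξ (y, X ω) ∂ν ∂P)
    -- nuisance estimates
    (πh : 𝒳 → ℝ) (hπhmeas : Measurable πh) (hπhmem : ∀ x, πh x ∈ Set.Icc ε 1)
    (ξh : 𝒴 × 𝒳 → ℝ) (hξhmeas : Measurable ξh)
    (hξhmem : ∀ q, ξh q ∈ Set.Icc c C)
    (hξhnorm : ∀ x, ∫ y, ξh (y, x) ∂ν = 1)
    -- candidate conditional densities of the target model class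
    (pstar p : 𝒴 × 𝒳 → ℝ)
    (hpstarmeas : Measurable pstar) (hpstarmem : ∀ q, pstar q ∈ Set.Icc c C)
    (hpstarnorm : ∀ x, ∫ y, pstar (y, x) ∂ν = 1)
    (hpmeas : Measurable p) (hpmem : ∀ q, p q ∈ Set.Icc c C)
    (hpnorm : ∀ x, ∫ y, p (y, x) ∂ν = 1) :
    ∃ δ > (0 : ℝ),
      -- G is well defined for |s|, |t| < δ
      (∀ s t : ℝ, |s| < δ → |t| < δ →
        Integrable (fun ω =>
          ((if A ω = a then (1 : ℝ) else 0) / (π (X ω) + s * (πh (X ω) - π (X ω))))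
            * Real.log (pstar (Y ω, X ω) + t * (p (Y ω, X ω) - pstar (Y ω, X ω)))
          + (1 - (if A ω = a then (1 : ℝ) else 0) / (π (X ω) + s * (πh (X ω) - π (X ω))))
            * ∫ y, Real.log (pstar (y, X ω) + t * (p (y, X ω) - pstar (y, X ω)))
                * (ξ (y, X ω) + s * (ξh (y, X ω) - ξ (y, X ω))) ∂ν) P)
      ∧
      ∃ D : ℝ → ℝ,
        -- for each |s| < δ, ∂ₜ G(s, t)|_{t=0} exists and equals D s
        (∀ s : ℝ, |s| < δ →
          HasDerivAt (fun t : ℝ => ∫ ω,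
            ((if A ω = a then (1 : ℝ) else 0) / (π (X ω) + s * (πh (X ω) - π (X ω))))
              * Real.log (pstar (Y ω, X ω) + t * (p (Y ω, X ω) - pstar (Y ω, X ω)))
            + (1 - (if A ω = a then (1 : ℝ) else 0) / (π (X ω) + s * (πh (X ω) - π (X ω))))
              * ∫ y, Real.log (pstar (y, X ω) + t * (p (y, X ω) - pstar (y, X ω)))
                  * (ξ (y, X ω) + s * (ξh (y, X ω) - ξ (y, X ω))) ∂ν ∂P) (D s) 0)
        -- s ↦ ∂ₜ G(s, 0) is differentiable at s = 0 and its derivative there vanishes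
        ∧ HasDerivAt D 0 0 :=
  gdr_neyman_orthogonality_cnf_general P X hX A hA Y hY a π hπmeas ε hε hoverlap ν c C hc hcC ξ
    hξmeas hξmem hξnorm hξdens πh hπhmeas hπhmem ξh hξhmeas hξhmem pstar p hpstarmeas hpstarmem
    hpmeas hpmem
end

section
/- Neyman-orthogonality of the GDR risk for conditional VAEs (ELBO objective): let μ be a finite measure on a standard Borel space 𝒵; let p*, p : 𝒴 × 𝒵 × 𝒳 → [c, C] be measurable joint model densities (∬ p*(y, z | x) dμ(z) dν(y) = ∬ p(y, z | x) dμ(z) dν(y) = 1 for all x) and q*, q : 𝒵 × 𝒴 × 𝒳 → [c, C] measurable encoder densities (∫ q*(z | y, x) dμ(z) = ∫ q(z | y, x) dμ(z) = 1 for all (y, x)). For s, t near 0 define π_s := π_a + s(π̂ − π_a), ξ_s := ξ + s(ξ̂ − ξ), ξ̃_s(X, A, y) := (𝟙{A = a}/π_s(X))(ξ(y|X) − ξ_s(y|X)) + ξ_s(y|X), p_t := p* + t(p − p*), q_t := q* + t(q − q*), and G(s, t) := E[∫_𝒴 ξ̃_s(X, A, y) (∫_𝒵 q_t(z | y, X)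 · log(p_t(y, z | X)/q_t(z | y, X)) dμ(z)) dν(y)]. Then there is δ > 0 such that G is well defined for |s|, |t| < δ and the mixed pathwise derivative vanishes: (d/ds)|_{s=0} (d/dt)|_{t=0} G(s, t) = 0. -/
/-!
The risk is `G(s, t) = ∫ ξ̃_s · ℓ_t` over `P ⊗ ν ⊗ μ`, where `ℓ_t = q_t log (p_t / q_t)`: a
factor moving only with `s` times a factor moving only with `t`. For small `s, t` every density
stays in a compact subinterval of `(0, ∞)` and the perturbed propensity stays above `ε / 2`, so
both factors and their derivatives are uniformly bounded and one may differentiate under the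
integral: `∂ₛ∂ₜ G(0, 0) = ∫ ∂ₛξ̃₀ · ∂ₜℓ₀`. Since `∂ₛξ̃₀ = (1 - 𝟙{A = a} / π(X)) (ξ̂ - ξ)` and `∂ₜℓ₀`
depends on `ω` only through `X`, this vanishes by inverse propensity weighting,
`E[𝟙{A = a} g(X) / π(X)] = E[g(X)]`, which is the density assumption on `ξ` for test functions
not depending on `y`.
-/

open MeasureTheory ProbabilityTheory

open Set Metric Filter

section Scalar

theorem abs_sub_le_of_mem_Icc {c C x y : ℝ} (hc : 0 ≤ c) (hx : x ∈ Icc c C) (hy : y ∈ Icc c C) :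
    |y - x| ≤ C :=
  (Real.dist_le_of_mem_Icc hy hx).trans (by linarith)

theorem add_mul_sub_mem_Icc_half {c C x y t : ℝ} (hc : 0 < c) (hx : x ∈ Icc c C)
    (hy : y ∈ Icc c C) (ht : |t| < c / (2 * C)) : x + t * (y - x) ∈ Icc (c / 2) (2 * C) := by
  have hC : 0 < C := hc.trans_le (hx.1.trans hx.2)
  have hyx := abs_sub_le_of_mem_Icc hc.le hx hy
  have hstep : |t * (y - x)| ≤ c / 2 :=
    calc |t * (y - x)| = |t| * |y - x| := abs_mul t (y - x)
      _ ≤ c / (2 * C) * C := mul_le_mul ht.le hyx (abs_nonneg _) (by positivity)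
      _ = c / 2 := by field_simp
  obtain ⟨hlo, hhi⟩ := abs_le.1 hstep
  constructor <;> linarith [hx.1, hx.2]

theorem abs_log_div_le {a b u v : ℝ} (ha : 0 < a) (hu : u ∈ Icc a b) (hv : v ∈ Icc a b) :
    |Real.log (u / v)| ≤ Real.log (b / a) := by
  have key : ∀ u ∈ Icc a b, ∀ v ∈ Icc a b, Real.log (u / v) ≤ Real.log (b / a) :=
    fun u hu v hv => Real.log_le_log (div_pos (ha.trans_le hu.1) (ha.trans_le hv.1))
      (div_le_div₀ (ha.le.trans (hu.1.trans hu.2)) hu.2 ha hv.1)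
  refine abs_le.2 ⟨?_, key u hu v hv⟩
  rw [neg_le, ← Real.log_inv, inv_div]
  exact key v hv u hu

theorem HasDerivAt.mul_log_div {f g : ℝ → ℝ} {f' g' t : ℝ} (hf : HasDerivAt f f' t)
    (hg : HasDerivAt g g' t) (hf0 : 0 < f t) (hg0 : 0 < g t) :
    HasDerivAt (fun t => f t * Real.log (g t / f t))
      (f' * Real.log (g t / f t) + (f t / g t * g' - f')) t := by
  refine (hf.mul ((hg.div hf hf0.ne').log (div_pos hg0 hf0).ne')).congr_deriv ?_
  simp only [Pi.div_apply]
  field_simp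

noncomputable def elboPath (q₀ q₁ p₀ p₁ t : ℝ) : ℝ :=
  (q₀ + t * (q₁ - q₀)) * Real.log ((p₀ + t * (p₁ - p₀)) / (q₀ + t * (q₁ - q₀)))

noncomputable def elboPathDeriv (q₀ q₁ p₀ p₁ t : ℝ) : ℝ :=
  (q₁ - q₀) * Real.log ((p₀ + t * (p₁ - p₀)) / (q₀ + t * (q₁ - q₀)))
    + ((q₀ + t * (q₁ - q₀)) / (p₀ + t * (p₁ - p₀)) * (p₁ - p₀) - (q₁ - q₀))

theorem hasDerivAt_elboPath {q₀ q₁ p₀ p₁ t : ℝ} (hq : 0 < q₀ + t * (q₁ - q₀))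
    (hp : 0 < p₀ + t * (p₁ - p₀)) :
    HasDerivAt (elboPath q₀ q₁ p₀ p₁) (elboPathDeriv q₀ q₁ p₀ p₁ t) t := by
  have hline : ∀ a b : ℝ, HasDerivAt (fun t => a + t * (b - a)) (b - a) t := fun a b => by
    simpa using ((hasDerivAt_id t).mul_const (b - a)).const_add a
  exact (hline q₀ q₁).mul_log_div (hline p₀ p₁) hq hp

theorem exists_bound_elboPath {c C : ℝ} (hc : 0 < c) : ∃ B, ∀ q₀ ∈ Icc c C, ∀ q₁ ∈ Icc c C,
    ∀ p₀ ∈ Icc c C, ∀ p₁ ∈ Icc c C, ∀ t, |t| < c / (2 * C) →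
      HasDerivAt (elboPath q₀ q₁ p₀ p₁) (elboPathDeriv q₀ q₁ p₀ p₁ t) t ∧
      |elboPath q₀ q₁ p₀ p₁ t| ≤ B ∧ |elboPathDeriv q₀ q₁ p₀ p₁ t| ≤ B := by
  set L := Real.log (2 * C / (c / 2))
  refine ⟨2 * C * L + (4 * C / c * C + 2 * C), fun q₀ hq₀ q₁ hq₁ p₀ hp₀ p₁ hp₁ t ht => ?_⟩
  have hq := add_mul_sub_mem_Icc_half hc hq₀ hq₁ ht
  have hp := add_mul_sub_mem_Icc_half hc hp₀ hp₁ ht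
  have hc2 : 0 < c / 2 := half_pos hc
  have hqpos := hc2.trans_le hq.1
  have hppos := hc2.trans_le hp.1
  have hlog := abs_log_div_le hc2 hp hq
  have hL : 0 ≤ L := (abs_nonneg _).trans hlog
  have hratio : |(q₀ + t * (q₁ - q₀)) / (p₀ + t * (p₁ - p₀))| ≤ 4 * C / c := by
    rw [abs_div, abs_of_pos hqpos, abs_of_pos hppos, div_le_div_iff₀ hppos hc]
    nlinarith [hq.2, hp.1]
  have hC : 0 < C := hc.trans_le (hq₀.1.trans hq₀.2)
  have hB : 0 ≤ 4 * C / c * C + 2 * C := by positivity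
  refine ⟨hasDerivAt_elboPath hqpos hppos, ?_, ?_⟩
  · calc |elboPath q₀ q₁ p₀ p₁ t|
        = |q₀ + t * (q₁ - q₀)| * |Real.log ((p₀ + t * (p₁ - p₀)) / (q₀ + t * (q₁ - q₀)))| :=
          abs_mul _ _
      _ ≤ 2 * C * L := by
          rw [abs_of_pos hqpos]; exact mul_le_mul hq.2 hlog (abs_nonneg _) (by linarith)
      _ ≤ _ := by linarith
  · have hq' := abs_sub_le_of_mem_Icc hc.le hq₀ hq₁
    have hp' := abs_sub_le_of_mem_Icc hc.le hp₀ hp₁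
    calc |elboPathDeriv q₀ q₁ p₀ p₁ t|
        ≤ |q₁ - q₀| * |Real.log ((p₀ + t * (p₁ - p₀)) / (q₀ + t * (q₁ - q₀)))|
          + (|(q₀ + t * (q₁ - q₀)) / (p₀ + t * (p₁ - p₀))| * |p₁ - p₀| + |q₁ - q₀|) := by
          unfold elboPathDeriv
          rw [← abs_mul, ← abs_mul]
          exact (abs_add_le _ _).trans (add_le_add_right (abs_sub _ _) _)
      _ ≤ C * L + (4 * C / c * C + C) := by
          gcongr
      _ ≤ _ := by nlinarith

-- The pseudo-density `ξ̃_s` of the paper at a single point, with `k = 𝟙{A = a}`.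
noncomputable def ipwPath (k π π' ξ ξ' s : ℝ) : ℝ :=
  k / (π + s * (π' - π)) * (ξ - (ξ + s * (ξ' - ξ))) + (ξ + s * (ξ' - ξ))

-- The pseudo-density `ξ̃_s` of the paper at a single point, with `k = 𝟙{A = a}`.
noncomputable def ipwPathDeriv (k π π' ξ ξ' s : ℝ) : ℝ :=
  (ξ' - ξ) * (1 - k * π / (π + s * (π' - π)) ^ 2)

theorem ipwPathDeriv_zero (k π π' ξ ξ' : ℝ) :
    ipwPathDeriv k π π' ξ ξ' 0 = (1 - k / π) * (ξ' - ξ) := by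
  rcases eq_or_ne π 0 with rfl | hπ
  · simp [ipwPathDeriv]
  · simp only [ipwPathDeriv, zero_mul, add_zero]
    field_simp

theorem hasDerivAt_ipwPath {k π π' ξ ξ' s : ℝ} (hπ : π + s * (π' - π) ≠ 0) :
    HasDerivAt (ipwPath k π π' ξ ξ') (ipwPathDeriv k π π' ξ ξ' s) s := by
  have hline : ∀ a b : ℝ, HasDerivAt (fun s => a + s * (b - a)) (b - a) s := fun a b => by
    simpa using ((hasDerivAt_id s).mul_const (b - a)).const_add a
  refine ((((hasDerivAt_const s k).div (hline π π') hπ).mul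
    ((hline ξ ξ').const_sub ξ)).add (hline ξ ξ')).congr_deriv ?_
  simp only [ipwPathDeriv, Pi.div_apply]
  field_simp
  ring

theorem exists_bound_ipwPath {ε c C : ℝ} (hε : 0 < ε) (hc : 0 < c) : ∃ B, ∀ k ∈ Icc (0 : ℝ) 1,
    ∀ π ∈ Icc ε 1, ∀ π' ∈ Icc ε 1, ∀ ξ ∈ Icc c C, ∀ ξ' ∈ Icc c C, ∀ s, |s| < ε / 2 →
      HasDerivAt (ipwPath k π π' ξ ξ') (ipwPathDeriv k π π' ξ ξ' s) s ∧
      |ipwPath k π π' ξ ξ' s| ≤ B ∧ |ipwPathDeriv k π π' ξ ξ' s| ≤ B := by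
  refine ⟨2 / ε * C + 2 * C + C * (1 + 4 / ε ^ 2),
    fun k hk π hπ π' hπ' ξ hξ ξ' hξ' s hs => ?_⟩
  have hπs := add_mul_sub_mem_Icc_half hε hπ hπ' (by simpa using hs)
  have hπspos : 0 < π + s * (π' - π) := (half_pos hε).trans_le hπs.1
  have hC : 0 < C := hc.trans_le (hξ.1.trans hξ.2)
  have hs1 : |s| ≤ 1 := by linarith [hπ.1, hπ.2]
  have hdξ := abs_sub_le_of_mem_Icc hc.le hξ hξ'
  have hstep : |s * (ξ' - ξ)| ≤ C := by
    rw [abs_mul]; nlinarith [abs_nonneg s, abs_nonneg (ξ' - ξ)]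
  have hweight : |k / (π + s * (π' - π))| ≤ 2 / ε := by
    rw [abs_div, abs_of_nonneg hk.1, abs_of_pos hπspos, div_le_div_iff₀ hπspos hε]
    nlinarith [hk.1, hk.2, hπs.1]
  have hcorr : |1 - k * π / (π + s * (π' - π)) ^ 2| ≤ 1 + 4 / ε ^ 2 := by
    have hkπ : k * π ≤ 1 := mul_le_one₀ hk.2 (hε.le.trans hπ.1) hπ.2
    have hsq : (ε / 2) ^ 2 ≤ (π + s * (π' - π)) ^ 2 := pow_le_pow_left₀ (by positivity) hπs.1 2
    have h0 : 0 ≤ k * π / (π + s * (π' - π)) ^ 2 := by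
      have := hk.1; have := hε.le.trans hπ.1; positivity
    have h1 : k * π / (π + s * (π' - π)) ^ 2 ≤ 4 / ε ^ 2 := by
      rw [div_le_div_iff₀ (by positivity) (by positivity)]
      nlinarith
    exact abs_le.2 ⟨by linarith, by linarith⟩
  refine ⟨hasDerivAt_ipwPath hπspos.ne', ?_, ?_⟩
  · calc |ipwPath k π π' ξ ξ' s|
        ≤ |k / (π + s * (π' - π))| * |s * (ξ' - ξ)| + (|ξ| + |s * (ξ' - ξ)|) := by
          unfold ipwPath
          rw [show ξ - (ξ + s * (ξ' - ξ)) = -(s * (ξ' - ξ)) by ring]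
          exact (abs_add_le _ _).trans
            (add_le_add (le_of_eq (by rw [abs_mul, abs_neg])) (abs_add_le _ _))
      _ ≤ 2 / ε * C + (C + C) := by
          gcongr
          exact abs_le.2 ⟨by linarith [hξ.1], hξ.2⟩
      _ ≤ _ := by nlinarith [show 0 ≤ 4 / ε ^ 2 by positivity]
  · calc |ipwPathDeriv k π π' ξ ξ' s|
        = |ξ' - ξ| * |1 - k * π / (π + s * (π' - π)) ^ 2| := abs_mul _ _
      _ ≤ C * (1 + 4 / ε ^ 2) := by gcongr
      _ ≤ _ := by nlinarith [show 0 ≤ 2 / ε by positivity]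

end Scalar

section ParametricIntegral

variable {α : Type*} [MeasurableSpace α] {M : Measure α} [IsFiniteMeasure M]

theorem hasDerivAt_integral_of_bound {F F' : ℝ → α → ℝ} {δ B : ℝ} (hδ : 0 < δ)
    (hF : ∀ t, AEStronglyMeasurable (F t) M) (hF' : AEStronglyMeasurable (F' 0) M)
    (h : ∀ᵐ r ∂M, ∀ t, |t| < δ →
      HasDerivAt (F · r) (F' t r) t ∧ ‖F t r‖ ≤ B ∧ ‖F' t r‖ ≤ B) :
    HasDerivAt (fun t => ∫ r, F t r ∂M) (∫ r, F' 0 r ∂M) 0 := by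
  have h' : ∀ᵐ r ∂M, ∀ t ∈ ball (0 : ℝ) δ,
      HasDerivAt (F · r) (F' t r) t ∧ ‖F t r‖ ≤ B ∧ ‖F' t r‖ ≤ B :=
    h.mono fun r hr t ht => hr t (by simpa using ht)
  exact (hasDerivAt_integral_of_dominated_loc_of_deriv_le (bound := fun _ => B)
    (ball_mem_nhds 0 hδ) (Eventually.of_forall hF)
    (.of_bound (hF 0) B (h'.mono fun _ hr => (hr 0 (mem_ball_self hδ)).2.1)) hF'
    (h'.mono fun _ hr t ht => (hr t ht).2.2) (integrable_const B)
    (h'.mono fun _ hr t ht => (hr t ht).1)).2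

theorem hasDerivAt_integral_mul_of_bound {a a' b b' : ℝ → α → ℝ} {δ A B : ℝ} (hδ : 0 < δ)
    (ha : ∀ s, AEStronglyMeasurable (a s) M) (ha' : AEStronglyMeasurable (a' 0) M)
    (hb : ∀ t, AEStronglyMeasurable (b t) M) (hb' : AEStronglyMeasurable (b' 0) M)
    (hda : ∀ᵐ r ∂M, ∀ s, |s| < δ →
      HasDerivAt (a · r) (a' s r) s ∧ ‖a s r‖ ≤ A ∧ ‖a' s r‖ ≤ A)
    (hdb : ∀ᵐ r ∂M, ∀ t, |t| < δ →
      HasDerivAt (b · r) (b' t r) t ∧ ‖b t r‖ ≤ B ∧ ‖b' t r‖ ≤ B) :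
    (∀ s, |s| < δ →
      HasDerivAt (fun t => ∫ r, a s r * b t r ∂M) (∫ r, a s r * b' 0 r ∂M) 0) ∧
    HasDerivAt (fun s => ∫ r, a s r * b' 0 r ∂M) (∫ r, a' 0 r * b' 0 r ∂M) 0 := by
  refine ⟨fun s hs => hasDerivAt_integral_of_bound (F := fun t r => a s r * b t r)
    (F' := fun t r => a s r * b' t r) (B := A * B) hδ
    (fun t => (ha s).mul (hb t)) ((ha s).mul hb') ?_,
    hasDerivAt_integral_of_bound (F := fun s r => a s r * b' 0 r)
    (F' := fun s r => a' s r * b' 0 r) (B := A * B) hδ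
    (fun s => (ha s).mul hb') (ha'.mul hb') ?_⟩
  · filter_upwards [hda, hdb] with r hra hrb t ht
    obtain ⟨-, has, -⟩ := hra s hs
    obtain ⟨hd, hbt, hb't⟩ := hrb t ht
    exact ⟨hd.const_mul _, norm_mul_le_of_le has hbt, norm_mul_le_of_le has hb't⟩
  · filter_upwards [hda, hdb] with r hra hrb s hs
    obtain ⟨-, -, hb'0⟩ := hrb 0 (by simpa using hδ)
    obtain ⟨hd, has, ha's⟩ := hra s hs
    exact ⟨hd.mul_const _, norm_mul_le_of_le has hb'0, norm_mul_le_of_le ha's hb'0⟩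

end ParametricIntegral

section IteratedIntegral

variable {Ω 𝒴 𝒵 : Type*} [MeasurableSpace Ω] [MeasurableSpace 𝒴] [MeasurableSpace 𝒵]
  {P : Measure Ω} {ν : Measure 𝒴} {μ : Measure 𝒵}

section SFinite

variable [SFinite P] [SFinite ν] [SFinite μ] {f : Ω → 𝒴 → ℝ} {g : Ω → 𝒴 → 𝒵 → ℝ}

theorem ae_integral_mul_integral_eq_integral_prod
    (h : Integrable (fun r : Ω × 𝒴 × 𝒵 => f r.1 r.2.1 * g r.1 r.2.1 r.2.2) (P.prod (ν.prod μ))) :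
    ∀ᵐ ω ∂P, ∫ y, f ω y * ∫ z, g ω y z ∂μ ∂ν = ∫ w, f ω w.1 * g ω w.1 w.2 ∂(ν.prod μ) := by
  filter_upwards [h.prod_right_ae] with ω hω
  simp_rw [← integral_const_mul]
  exact integral_integral hω

theorem integrable_integral_mul_integral
    (h : Integrable (fun r : Ω × 𝒴 × 𝒵 => f r.1 r.2.1 * g r.1 r.2.1 r.2.2) (P.prod (ν.prod μ))) :
    Integrable (fun ω => ∫ y, f ω y * ∫ z, g ω y z ∂μ ∂ν) P :=
  h.integral_prod_left.congr ((ae_integral_mul_integral_eq_integral_prod h).mono fun _ => Eq.symm)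

theorem integral_integral_mul_integral
    (h : Integrable (fun r : Ω × 𝒴 × 𝒵 => f r.1 r.2.1 * g r.1 r.2.1 r.2.2) (P.prod (ν.prod μ))) :
    ∫ ω, ∫ y, f ω y * ∫ z, g ω y z ∂μ ∂ν ∂P
      = ∫ r, f r.1 r.2.1 * g r.1 r.2.1 r.2.2 ∂(P.prod (ν.prod μ)) := by
  rw [integral_congr_ae (ae_integral_mul_integral_eq_integral_prod h), integral_prod _ h]

end SFinite

theorem hasDerivAt_integral_integral_mul_integral [IsFiniteMeasure P] [IsFiniteMeasure ν]
    [IsFiniteMeasure μ] {f f' : ℝ → Ω → 𝒴 → ℝ} {g g' : ℝ → Ω → 𝒴 → 𝒵 → ℝ} {δ A B : ℝ}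
    (hδ : 0 < δ)
    (hf : ∀ s, AEStronglyMeasurable (fun r : Ω × 𝒴 × 𝒵 => f s r.1 r.2.1) (P.prod (ν.prod μ)))
    (hf' : AEStronglyMeasurable (fun r : Ω × 𝒴 × 𝒵 => f' 0 r.1 r.2.1) (P.prod (ν.prod μ)))
    (hg : ∀ t, AEStronglyMeasurable (fun r : Ω × 𝒴 × 𝒵 => g t r.1 r.2.1 r.2.2)
      (P.prod (ν.prod μ)))
    (hg' : AEStronglyMeasurable (fun r : Ω × 𝒴 × 𝒵 => g' 0 r.1 r.2.1 r.2.2)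
      (P.prod (ν.prod μ)))
    (hdf : ∀ᵐ r ∂(P.prod (ν.prod μ)), ∀ s, |s| < δ →
      HasDerivAt (f · r.1 r.2.1) (f' s r.1 r.2.1) s ∧
        ‖f s r.1 r.2.1‖ ≤ A ∧ ‖f' s r.1 r.2.1‖ ≤ A)
    (hdg : ∀ᵐ r ∂(P.prod (ν.prod μ)), ∀ t, |t| < δ →
      HasDerivAt (g · r.1 r.2.1 r.2.2) (g' t r.1 r.2.1 r.2.2) t ∧
        ‖g t r.1 r.2.1 r.2.2‖ ≤ B ∧ ‖g' t r.1 r.2.1 r.2.2‖ ≤ B) :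
    (∀ s t, |s| < δ → |t| < δ →
      Integrable (fun ω => ∫ y, f s ω y * ∫ z, g t ω y z ∂μ ∂ν) P) ∧
    (∀ s, |s| < δ →
      HasDerivAt (fun t => ∫ ω, ∫ y, f s ω y * ∫ z, g t ω y z ∂μ ∂ν ∂P)
        (∫ r, f s r.1 r.2.1 * g' 0 r.1 r.2.1 r.2.2 ∂(P.prod (ν.prod μ))) 0) ∧
    HasDerivAt (fun s => ∫ r, f s r.1 r.2.1 * g' 0 r.1 r.2.1 r.2.2 ∂(P.prod (ν.prod μ)))
      (∫ r, f' 0 r.1 r.2.1 * g' 0 r.1 r.2.1 r.2.2 ∂(P.prod (ν.prod μ))) 0 := by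
  have hint : ∀ s t, |s| < δ → |t| < δ → Integrable
      (fun r : Ω × 𝒴 × 𝒵 => f s r.1 r.2.1 * g t r.1 r.2.1 r.2.2) (P.prod (ν.prod μ)) :=
    fun s t hs ht => .of_bound ((hf s).mul (hg t)) (A * B) <| by
      filter_upwards [hdf, hdg] with r hrf hrg
      exact norm_mul_le_of_le (hrf s hs).2.1 (hrg t ht).2.1
  obtain ⟨hdt, hds⟩ := hasDerivAt_integral_mul_of_bound
    (a := fun s (r : Ω × 𝒴 × 𝒵) => f s r.1 r.2.1)
    (b := fun t (r : Ω × 𝒴 × 𝒵) => g t r.1 r.2.1 r.2.2)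
    hδ hf hf' hg hg' hdf hdg
  refine ⟨fun s t hs ht => integrable_integral_mul_integral (hint s t hs ht),
    fun s hs => (hdt s hs).congr_of_eventuallyEq ?_, hds⟩
  filter_upwards [ball_mem_nhds (0 : ℝ) hδ] with t ht
  exact integral_integral_mul_integral (hint s t hs (by simpa using ht))

end IteratedIntegral

section InversePropensityWeighting

variable {Ω 𝒳 𝒴 : Type*} [MeasurableSpace Ω] [MeasurableSpace 𝒳] [MeasurableSpace 𝒴]
  {P : Measure Ω} {X : Ω → 𝒳} {Y : Ω → 𝒴} {K : Ω → ℝ} {π : 𝒳 → ℝ} {ν : Measure 𝒴}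
  {ξ : 𝒴 × 𝒳 → ℝ} {ε : ℝ}

theorem integral_div_propensity_mul (hε : 0 < ε) (hπ : Measurable π)
    (hoverlap : ∀ᵐ ω ∂P, ε ≤ π (X ω)) (hξnorm : ∀ x, ∫ y, ξ (y, x) ∂ν = 1)
    (hξdens : ∀ f : 𝒴 × 𝒳 → ℝ, Measurable f → (∃ B : ℝ, ∀ q, |f q| ≤ B) →
      ∫ ω, K ω * f (Y ω, X ω) ∂P = ∫ ω, π (X ω) * ∫ y, f (y, X ω) * ξ (y, X ω) ∂ν ∂P)
    {g : 𝒳 → ℝ} (hg : Measurable g) {B : ℝ} (hgB : ∀ x, |g x| ≤ B) :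
    ∫ ω, K ω / π (X ω) * g (X ω) ∂P = ∫ ω, g (X ω) ∂P := by
  -- clamping the propensity at `ε` makes `g / π` a bounded test function
  set f : 𝒴 × 𝒳 → ℝ := fun q => g q.2 / max (π q.2) ε
  have hf : Measurable f := by fun_prop
  have hfB : ∀ q, |f q| ≤ B / ε := fun q => by
    rw [abs_div, abs_of_pos (hε.trans_le (le_max_right _ _))]
    exact div_le_div₀ ((abs_nonneg _).trans (hgB q.2)) (hgB _) hε (le_max_right _ _)
  convert hξdens f hf ⟨_, hfB⟩ using 1 <;>
    refine integral_congr_ae (hoverlap.mono fun ω hω => ?_)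
  · simp only [f, max_eq_left hω]
    ring
  · have hπ0 : π (X ω) ≠ 0 := (hε.trans_le hω).ne'
    simp only [f, max_eq_left hω, integral_const_mul, hξnorm]
    field_simp

theorem abs_div_le_one_div_of_le {k p ε : ℝ} (hk : |k| ≤ 1) (hε : 0 < ε) (hp : ε ≤ p) :
    |k / p| ≤ 1 / ε := by
  rw [abs_div, abs_of_pos (hε.trans_le hp)]
  exact div_le_div₀ zero_le_one hk hε hp

theorem integral_one_sub_div_propensity_mul_eq_zero [IsFiniteMeasure P] (hX : Measurable X)
    (hK : Measurable K) (hK1 : ∀ ω, |K ω| ≤ 1) (hε : 0 < ε) (hπ : Measurable π)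
    (hoverlap : ∀ᵐ ω ∂P, ε ≤ π (X ω)) (hξnorm : ∀ x, ∫ y, ξ (y, x) ∂ν = 1)
    (hξdens : ∀ f : 𝒴 × 𝒳 → ℝ, Measurable f → (∃ B : ℝ, ∀ q, |f q| ≤ B) →
      ∫ ω, K ω * f (Y ω, X ω) ∂P = ∫ ω, π (X ω) * ∫ y, f (y, X ω) * ξ (y, X ω) ∂ν ∂P)
    {g : 𝒳 → ℝ} (hg : Measurable g) {B : ℝ} (hgB : ∀ x, |g x| ≤ B) :
    ∫ ω, (1 - K ω / π (X ω)) * g (X ω) ∂P = 0 := by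
  have hint : Integrable (fun ω => g (X ω)) P :=
    .of_bound (hg.comp hX).aestronglyMeasurable B (ae_of_all _ fun ω => hgB (X ω))
  have hint' : Integrable (fun ω => K ω / π (X ω) * g (X ω)) P := by
    refine .of_bound ((hK.div (hπ.comp hX)).mul (hg.comp hX)).aestronglyMeasurable (1 / ε * B)
      (hoverlap.mono fun ω hω => ?_)
    exact norm_mul_le_of_le (abs_div_le_one_div_of_le (hK1 ω) hε hω) (hgB _)
  simp_rw [sub_mul, one_mul]
  rw [integral_sub hint hint', integral_div_propensity_mul hε hπ hoverlap hξnorm hξdens hg hgB,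
    sub_self]

theorem integral_prod_one_sub_div_propensity_mul_eq_zero [IsFiniteMeasure P]
    {𝒲 : Type*} [MeasurableSpace 𝒲] {ρ : Measure 𝒲} [IsFiniteMeasure ρ] (hX : Measurable X)
    (hK : Measurable K) (hK1 : ∀ ω, |K ω| ≤ 1) (hε : 0 < ε) (hπ : Measurable π)
    (hoverlap : ∀ᵐ ω ∂P, ε ≤ π (X ω)) (hξnorm : ∀ x, ∫ y, ξ (y, x) ∂ν = 1)
    (hξdens : ∀ f : 𝒴 × 𝒳 → ℝ, Measurable f → (∃ B : ℝ, ∀ q, |f q| ≤ B) →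
      ∫ ω, K ω * f (Y ω, X ω) ∂P = ∫ ω, π (X ω) * ∫ y, f (y, X ω) * ξ (y, X ω) ∂ν ∂P)
    {h : 𝒳 → 𝒲 → ℝ} (hh : Measurable (Function.uncurry h)) {B : ℝ} (hhB : ∀ x w, ‖h x w‖ ≤ B) :
    ∫ r : Ω × 𝒲, (1 - K r.1 / π (X r.1)) * h (X r.1) r.2 ∂(P.prod ρ) = 0 := by
  have hint : Integrable (fun r : Ω × 𝒲 => (1 - K r.1 / π (X r.1)) * h (X r.1) r.2)
      (P.prod ρ) := by
    refine .of_bound (by fun_prop) ((1 + 1 / ε) * B) ?_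
    filter_upwards [Measure.quasiMeasurePreserving_fst.ae hoverlap] with r hr
    exact norm_mul_le_of_le ((abs_sub _ _).trans
      (add_le_add abs_one.le (abs_div_le_one_div_of_le (hK1 _) hε hr))) (hhB _ _)
  rw [integral_prod _ hint]
  simp_rw [integral_const_mul]
  exact integral_one_sub_div_propensity_mul_eq_zero hX hK hK1 hε hπ hoverlap hξnorm hξdens
    hh.stronglyMeasurable.integral_prod_right'.measurable (B := B * ρ.real univ)
    fun x => norm_integral_le_of_norm_le_const (f := h x) (ae_of_all _ (hhB x))

end InversePropensityWeighting

theorem gdr_neyman_orthogonality_cvae_general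
    {Ω : Type*} [MeasurableSpace Ω]
    (P : Measure Ω) [IsProbabilityMeasure P]
    {𝒳 : Type*} [MeasurableSpace 𝒳]
    {𝒴 : Type*} [MeasurableSpace 𝒴]
    (X : Ω → 𝒳) (hX : Measurable X)
    (A : Ω → Bool) (hA : Measurable A)
    (Y : Ω → 𝒴)
    (a : Bool)
    -- propensity score: σ(X)-measurable version of E[𝟙{A = a} | σ(X)]
    (π : 𝒳 → ℝ) (hπmeas : Measurable π)
    -- strong overlap
    (ε : ℝ) (hε : 0 < ε)
    (hoverlap : ∀ᵐ ω ∂P, ε ≤ π (X ω) ∧ π (X ω) ≤ 1 - ε)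
    -- density setup
    (ν : Measure 𝒴) [IsFiniteMeasure ν]
    (c C : ℝ) (hc : 0 < c) (hcC : c ≤ C)
    (ξ : 𝒴 × 𝒳 → ℝ) (hξmeas : Measurable ξ)
    (hξmem : ∀ q, ξ q ∈ Set.Icc c C)
    (hξnorm : ∀ x, ∫ y, ξ (y, x) ∂ν = 1)
    -- ξ is the conditional outcome density
    (hξdens : ∀ f : 𝒴 × 𝒳 → ℝ, Measurable f → (∃ B : ℝ, ∀ q, |f q| ≤ B) →
      ∫ ω, (if A ω = a then (1 : ℝ) else 0) * f (Y ω, X ω) ∂P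
        = ∫ ω, π (X ω) * ∫ y, f (y, X ω) * ξ (y, X ω) ∂ν ∂P)
    -- nuisance estimates
    (πh : 𝒳 → ℝ) (hπhmeas : Measurable πh) (hπhmem : ∀ x, πh x ∈ Set.Icc ε 1)
    (ξh : 𝒴 × 𝒳 → ℝ) (hξhmeas : Measurable ξh)
    (hξhmem : ∀ q, ξh q ∈ Set.Icc c C)
    -- latent space and its reference measure
    {𝒵 : Type*} [MeasurableSpace 𝒵]
    (μ : Measure 𝒵) [IsFiniteMeasure μ]
    -- candidate joint model densities
    (pstar p : 𝒴 × 𝒵 × 𝒳 → ℝ)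
    (hpstarmeas : Measurable pstar) (hpstarmem : ∀ v, pstar v ∈ Set.Icc c C)
    (hpmeas : Measurable p) (hpmem : ∀ v, p v ∈ Set.Icc c C)
    -- candidate encoder densities
    (qstar q : 𝒵 × 𝒴 × 𝒳 → ℝ)
    (hqstarmeas : Measurable qstar) (hqstarmem : ∀ v, qstar v ∈ Set.Icc c C)
    (hqmeas : Measurable q) (hqmem : ∀ v, q v ∈ Set.Icc c C) :
    -- perturbed pseudo-density ξ̃_s and perturbed targets p_t, q_t
    ∀ (ξt : ℝ → Ω → 𝒴 → ℝ) (pt : ℝ → 𝒴 × 𝒵 × 𝒳 → ℝ) (qt : ℝ → 𝒵 × 𝒴 × 𝒳 → ℝ),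
      (∀ s ω y, ξt s ω y =
        ((if A ω = a then (1 : ℝ) else 0) / (π (X ω) + s * (πh (X ω) - π (X ω))))
          * (ξ (y, X ω) - (ξ (y, X ω) + s * (ξh (y, X ω) - ξ (y, X ω))))
        + (ξ (y, X ω) + s * (ξh (y, X ω) - ξ (y, X ω)))) →
      (∀ t v, pt t v = pstar v + t * (p v - pstar v)) →
      (∀ t v, qt t v = qstar v + t * (q v - qstar v)) →
      ∃ δ > (0 : ℝ),
        -- G is well defined for |s|, |t| < δ
        (∀ s t : ℝ, |s| < δ → |t| < δ →
          Integrable (fun ω => ∫ y, ξt s ω y *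
            ∫ z, qt t (z, y, X ω)
              * Real.log (pt t (y, z, X ω) / qt t (z, y, X ω)) ∂μ ∂ν) P)
        ∧
        ∃ D : ℝ → ℝ,
          (∀ s : ℝ, |s| < δ →
            HasDerivAt (fun t : ℝ => ∫ ω, ∫ y, ξt s ω y *
              ∫ z, qt t (z, y, X ω)
                * Real.log (pt t (y, z, X ω) / qt t (z, y, X ω)) ∂μ ∂ν ∂P) (D s) 0)
          ∧ HasDerivAt D 0 0 := by
  intro ξt pt qt hξt hpt hqt
  set K : Ω → ℝ := fun ω => if A ω = a then 1 else 0
  have hK : Measurable K := Measurable.ite (hA (measurableSet_singleton a)) measurable_const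
    measurable_const
  have hK01 : ∀ ω, K ω ∈ Icc (0 : ℝ) 1 := fun ω => by by_cases h : A ω = a <;> simp [K, h]
  obtain rfl : ξt = fun s ω y =>
      ipwPath (K ω) (π (X ω)) (πh (X ω)) (ξ (y, X ω)) (ξh (y, X ω)) s := by
    funext s ω y; exact hξt s ω y
  obtain rfl : pt = fun t v => pstar v + t * (p v - pstar v) := funext₂ hpt
  obtain rfl : qt = fun t v => qstar v + t * (q v - qstar v) := funext₂ hqt
  obtain ⟨Bξ, hBξ⟩ := exists_bound_ipwPath hε hc (C := C)
  obtain ⟨Bℓ, hBℓ⟩ := exists_bound_elboPath hc (C := C)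
  have hC : 0 < C := hc.trans_le hcC
  set δ := min (ε / 2) (c / (2 * C))
  have hδ : 0 < δ := by positivity
  obtain ⟨hint, hdt, hds⟩ := hasDerivAt_integral_integral_mul_integral (P := P) (ν := ν) (μ := μ)
    (f := fun s ω y => ipwPath (K ω) (π (X ω)) (πh (X ω)) (ξ (y, X ω)) (ξh (y, X ω)) s)
    (g := fun t ω y z => elboPath (qstar (z, y, X ω)) (q (z, y, X ω)) (pstar (y, z, X ω))
      (p (y, z, X ω)) t)
    (f' := fun s ω y => ipwPathDeriv (K ω) (π (X ω)) (πh (X ω)) (ξ (y, X ω)) (ξh (y, X ω)) s)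
    (g' := fun t ω y z => elboPathDeriv (qstar (z, y, X ω)) (q (z, y, X ω)) (pstar (y, z, X ω))
      (p (y, z, X ω)) t)
    hδ (fun s => by unfold ipwPath; fun_prop) (by unfold ipwPathDeriv; fun_prop)
    (fun t => by unfold elboPath; fun_prop) (by unfold elboPathDeriv; fun_prop)
    (by
      filter_upwards [Measure.quasiMeasurePreserving_fst.ae hoverlap] with r hr s hs
      exact hBξ _ (hK01 _) _ ⟨hr.1, by linarith [hr.2]⟩ _ (hπhmem _) _ (hξmem _) _ (hξhmem _) s
        (hs.trans_le (min_le_left _ _)))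
    (ae_of_all _ fun r t ht => hBℓ _ (hqstarmem _) _ (hqmem _) _ (hpstarmem _) _ (hpmem _) t
      (ht.trans_le (min_le_right _ _)))
  refine ⟨δ, hδ, hint, _, hdt, hds.congr_deriv ?_⟩
  simp only [ipwPathDeriv_zero, mul_assoc]
  exact integral_prod_one_sub_div_propensity_mul_eq_zero hX hK
    (fun ω => abs_le.2 ⟨by linarith [(hK01 ω).1], (hK01 ω).2⟩) hε hπmeas
    (hoverlap.mono fun _ h => h.1) hξnorm hξdens
    (h := fun x (w : 𝒴 × 𝒵) => (ξh (w.1, x) - ξ (w.1, x)) * elboPathDeriv (qstar (w.2, w.1, x))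
      (q (w.2, w.1, x)) (pstar (w.1, w.2, x)) (p (w.1, w.2, x)) 0)
    (by unfold elboPathDeriv; fun_prop) (B := C * Bℓ) fun x w => norm_mul_le_of_le
      (abs_sub_le_of_mem_Icc hc.le (hξmem _) (hξhmem _))
      (hBℓ _ (hqstarmem _) _ (hqmem _) _ (hpstarmem _) _ (hpmem _) 0
        (by rw [abs_zero]; positivity)).2.2

/-- Neyman-orthogonality of the GDR risk for conditional VAEs (ELBO objective):
with perturbed nuisances `π_s := π_a + s(π̂ − π_a)`, `ξ_s := ξ + s(ξ̂ − ξ)`, perturbed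
pseudo-density `ξ̃_s`, and perturbed targets `p_t := p* + t(p − p*)`, `q_t := q* + t(q − q*)`,
the risk `G(s, t) := E[∫_𝒴 ξ̃_s(X, A, y) (∫_𝒵 q_t(z|y,X) log(p_t(y,z|X)/q_t(z|y,X)) dμ) dν]`
is well defined for `|s|, |t| < δ` (some δ > 0) and the mixed pathwise derivative vanishes:
`(d/ds)|₀ (d/dt)|₀ G(s, t) = 0`. -/
theorem gdr_neyman_orthogonality_cvae
    {Ω : Type*} [MeasurableSpace Ω]
    (P : Measure Ω) [IsProbabilityMeasure P]
    {𝒳 : Type*} [MeasurableSpace 𝒳] [StandardBorelSpace 𝒳]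
    {𝒴 : Type*} [MeasurableSpace 𝒴] [StandardBorelSpace 𝒴]
    (X : Ω → 𝒳) (hX : Measurable X)
    (A : Ω → Bool) (hA : Measurable A)
    (Y : Ω → 𝒴) (hY : Measurable Y)
    (a : Bool)
    -- propensity score: σ(X)-measurable version of E[𝟙{A = a} | σ(X)]
    (π : 𝒳 → ℝ) (hπmeas : Measurable π)
    (hπver : P[fun ω => (if A ω = a then (1 : ℝ) else 0) |
        MeasurableSpace.comap X inferInstance] =ᵐ[P] fun ω => π (X ω))
    -- strong overlap
    (ε : ℝ) (hε : 0 < ε)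
    (hoverlap : ∀ᵐ ω ∂P, ε ≤ π (X ω) ∧ π (X ω) ≤ 1 - ε)
    -- density setup
    (ν : Measure 𝒴) [IsFiniteMeasure ν]
    (c C : ℝ) (hc : 0 < c) (hcC : c ≤ C)
    (ξ : 𝒴 × 𝒳 → ℝ) (hξmeas : Measurable ξ)
    (hξmem : ∀ q, ξ q ∈ Set.Icc c C)
    (hξnorm : ∀ x, ∫ y, ξ (y, x) ∂ν = 1)
    -- ξ is the conditional outcome density
    (hξdens : ∀ f : 𝒴 × 𝒳 → ℝ, Measurable f → (∃ B : ℝ, ∀ q, |f q| ≤ B) →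
      ∫ ω, (if A ω = a then (1 : ℝ) else 0) * f (Y ω, X ω) ∂P
        = ∫ ω, π (X ω) * ∫ y, f (y, X ω) * ξ (y, X ω) ∂ν ∂P)
    -- nuisance estimates
    (πh : 𝒳 → ℝ) (hπhmeas : Measurable πh) (hπhmem : ∀ x, πh x ∈ Set.Icc ε 1)
    (ξh : 𝒴 × 𝒳 → ℝ) (hξhmeas : Measurable ξh)
    (hξhmem : ∀ q, ξh q ∈ Set.Icc c C)
    (hξhnorm : ∀ x, ∫ y, ξh (y, x) ∂ν = 1)
    -- latent space and its reference measure
    {𝒵 : Type*} [MeasurableSpace 𝒵] [StandardBorelSpace 𝒵]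
    (μ : Measure 𝒵) [IsFiniteMeasure μ]
    -- candidate joint model densities
    (pstar p : 𝒴 × 𝒵 × 𝒳 → ℝ)
    (hpstarmeas : Measurable pstar) (hpstarmem : ∀ v, pstar v ∈ Set.Icc c C)
    (hpstarnorm : ∀ x, ∫ y, ∫ z, pstar (y, z, x) ∂μ ∂ν = 1)
    (hpmeas : Measurable p) (hpmem : ∀ v, p v ∈ Set.Icc c C)
    (hpnorm : ∀ x, ∫ y, ∫ z, p (y, z, x) ∂μ ∂ν = 1)
    -- candidate encoder densities
    (qstar q : 𝒵 × 𝒴 × 𝒳 → ℝ)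
    (hqstarmeas : Measurable qstar) (hqstarmem : ∀ v, qstar v ∈ Set.Icc c C)
    (hqstarnorm : ∀ y x, ∫ z, qstar (z, y, x) ∂μ = 1)
    (hqmeas : Measurable q) (hqmem : ∀ v, q v ∈ Set.Icc c C)
    (hqnorm : ∀ y x, ∫ z, q (z, y, x) ∂μ = 1) :
    -- perturbed pseudo-density ξ̃_s and perturbed targets p_t, q_t
    ∀ (ξt : ℝ → Ω → 𝒴 → ℝ) (pt : ℝ → 𝒴 × 𝒵 × 𝒳 → ℝ) (qt : ℝ → 𝒵 × 𝒴 × 𝒳 → ℝ),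
      (∀ s ω y, ξt s ω y =
        ((if A ω = a then (1 : ℝ) else 0) / (π (X ω) + s * (πh (X ω) - π (X ω))))
          * (ξ (y, X ω) - (ξ (y, X ω) + s * (ξh (y, X ω) - ξ (y, X ω))))
        + (ξ (y, X ω) + s * (ξh (y, X ω) - ξ (y, X ω)))) →
      (∀ t v, pt t v = pstar v + t * (p v - pstar v)) →
      (∀ t v, qt t v = qstar v + t * (q v - qstar v)) →
      ∃ δ > (0 : ℝ),
        -- G is well defined for |s|, |t| < δ
        (∀ s t : ℝ, |s| < δ → |t| < δ →
          Integrable (fun ω => ∫ y, ξt s ω y *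
            ∫ z, qt t (z, y, X ω)
              * Real.log (pt t (y, z, X ω) / qt t (z, y, X ω)) ∂μ ∂ν) P)
        ∧
        ∃ D : ℝ → ℝ,
          (∀ s : ℝ, |s| < δ →
            HasDerivAt (fun t : ℝ => ∫ ω, ∫ y, ξt s ω y *
              ∫ z, qt t (z, y, X ω)
                * Real.log (pt t (y, z, X ω) / qt t (z, y, X ω)) ∂μ ∂ν ∂P) (D s) 0)
          ∧ HasDerivAt D 0 0 :=
  gdr_neyman_orthogonality_cvae_general P X hX A hA Y a π hπmeas ε hε hoverlap ν c C hc hcC ξ hξmeas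
    hξmem hξnorm hξdens πh hπhmeas hπhmem ξh hξhmeas hξhmem μ pstar p hpstarmeas hpstarmem hpmeas
    hpmem qstar q hqstarmeas hqstarmem hqmeas hqmem
end
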